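/- arXiv:2402.12200 — 8 statements merged into one kernel-verified Lean document; each statement's English description precedes it below -/
import Mathlib

section
/- Let (μ*, u*, v*) be a stable outcome of the LTU matching problem, and define the mixed strategies p*, q* by p*_{xy} = Φ_{xy} μ*_{xy} / (Φᵀμ*), q*_x = n_x u*_x / (nᵀu* + mᵀv*), q*_y = m_y v*_y / (nᵀu* + mᵀv*). Then for every probability distribution p on X × Y, the expected loss of player 1 satisfies ℓ(p, q*) ≥ 1 / (2(nᵀu* + mᵀv*)), with equality when p = p*. In particular p* is a best response to q* in the generalized hide-and-seek game. -/
/-!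
Against `q*`, the loss of player 1 at the cell `(x, y)` is
`(λ u*_x + (1 - λ) v*_y) / (Φ_{xy} S)` with `S = nᵀu* + mᵀv*`. Stability condition (1) bounds
this below by `1 / (2S)`, so every mixed strategy loses at least `1 / (2S)`; complementary
slackness (4) makes it equal to `1 / (2S)` on the support of `μ*`, which is the support of `p*`.
-/

open Finset

theorem le_sum_mul_of_forall_le {ι : Type*} [Fintype ι] {p f : ι → ℝ} {c : ℝ}
    (hp0 : ∀ i, 0 ≤ p i) (hp1 : ∑ i, p i = 1) (hf : ∀ i, c ≤ f i) : c ≤ ∑ i, p i * f i :=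
  calc c = ∑ i, p i * c := by rw [← sum_mul, hp1, one_mul]
    _ ≤ ∑ i, p i * f i := sum_le_sum fun i _ => mul_le_mul_of_nonneg_left (hf i) (hp0 i)

theorem cell_loss_of_dual_strategy {a b φ S : ℝ} (ha : a ≠ 0) (hb : b ≠ 0) (l u v : ℝ) :
    a * u / S * (l / (a * φ)) + b * v / S * ((1 - l) / (b * φ)) =
      (l * u + (1 - l) * v) / (φ * S) := by
  rw [div_mul_div_comm, div_mul_div_comm, mul_comm S (a * φ), mul_comm S (b * φ),
    mul_assoc a, mul_assoc b, mul_assoc a, mul_assoc b, mul_div_mul_left _ _ ha,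
    mul_div_mul_left _ _ hb, ← add_div, mul_comm u, mul_comm v]

theorem half_div_mul_self_left {φ : ℝ} (hφ : φ ≠ 0) (S : ℝ) : φ / 2 / (φ * S) = 1 / (2 * S) := by
  rw [div_div, mul_comm 2 (φ * S), mul_assoc, ← div_div, div_self hφ, mul_comm S]

theorem one_div_two_mul_le_div {a φ S : ℝ} (h : φ / 2 ≤ a) (hφ : 0 < φ) (hS : 0 ≤ S) :
    1 / (2 * S) ≤ a / (φ * S) := by
  rw [← half_div_mul_self_left hφ.ne' S]
  exact div_le_div_of_nonneg_right h (mul_nonneg hφ.le hS)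

section Stability

variable {X Y : Type*} [Fintype X] [Fintype Y] {n : X → ℝ} {m : Y → ℝ} {μ : X → Y → ℝ}
  {u : X → ℝ} {v : Y → ℝ}

theorem dual_value_eq_zero_of_matching_eq_zero (hn : ∀ x, 0 < n x) (hm : ∀ y, 0 < m y)
    (hu0 : ∀ x, 0 ≤ u x) (hv0 : ∀ y, 0 ≤ v y)
    (hrow : ∀ x, 0 < u x → ∑ y, μ x y = n x) (hcol : ∀ y, 0 < v y → ∑ x, μ x y = m y)
    (hμ : ∀ x y, μ x y = 0) : (∑ x, n x * u x) + ∑ y, m y * v y = 0 := by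
  have hu : ∀ x, u x = 0 := fun x => (hu0 x).eq_of_not_lt' fun hx =>
    (hn x).ne' (by simp [← hrow x hx, hμ])
  have hv : ∀ y, v y = 0 := fun y => (hv0 y).eq_of_not_lt' fun hy =>
    (hm y).ne' (by simp [← hcol y hy, hμ])
  simp [hu, hv]

theorem eq_zero_of_sum_sum_mul_eq_zero {Φ : X → Y → ℝ} (hΦ : ∀ x y, 0 < Φ x y)
    (hμ0 : ∀ x y, 0 ≤ μ x y) (h : ∑ x, ∑ y, Φ x y * μ x y = 0) (x : X) (y : Y) : μ x y = 0 := by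
  rw [← Fintype.sum_prod_type', Fintype.sum_eq_zero_iff_of_nonneg
    fun z => mul_nonneg (hΦ _ _).le (hμ0 _ _)] at h
  exact (mul_eq_zero.1 (congrFun h (x, y))).resolve_left (hΦ x y).ne'

end Stability

theorem ltu_player1_best_response_general
    {X Y : Type*} [Fintype X] [Fintype Y]
    (n : X → ℝ) (m : Y → ℝ) (lam Φ : X → Y → ℝ)
    (μ : X → Y → ℝ) (u : X → ℝ) (v : Y → ℝ)
    (hn : ∀ x, 0 < n x) (hm : ∀ y, 0 < m y)
    (hΦ : ∀ x y, 0 < Φ x y)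
    (hμ0 : ∀ x y, 0 ≤ μ x y) (hu0 : ∀ x, 0 ≤ u x) (hv0 : ∀ y, 0 ≤ v y)
    (h1 : ∀ x y, lam x y * u x + (1 - lam x y) * v y ≥ Φ x y / 2)
    (h4 : ∀ x y, 0 < μ x y → lam x y * u x + (1 - lam x y) * v y = Φ x y / 2)
    (h5 : ∀ x, 0 < u x → ∑ y, μ x y = n x)
    (h6 : ∀ y, 0 < v y → ∑ x, μ x y = m y)
    -- expected loss of player 1
    (ℓ : (X × Y → ℝ) → (X ⊕ Y → ℝ) → ℝ)
    (hℓ : ∀ p q, ℓ p q = ∑ x, ∑ y, p (x, y) *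
      (q (Sum.inl x) * (lam x y / (n x * Φ x y)) +
       q (Sum.inr y) * ((1 - lam x y) / (m y * Φ x y))))
    -- the strategies p*, q*
    (pstar : X × Y → ℝ) (qstar : X ⊕ Y → ℝ)
    (hp : ∀ z : X × Y, pstar z = Φ z.1 z.2 * μ z.1 z.2 / (∑ x, ∑ y, Φ x y * μ x y))
    (hq : qstar = Sum.elim
      (fun x => n x * u x / ((∑ x, n x * u x) + (∑ y, m y * v y)))
      (fun y => m y * v y / ((∑ x, n x * u x) + (∑ y, m y * v y)))) :
    (∀ p : X × Y → ℝ, (∀ z, 0 ≤ p z) → (∑ z, p z) = 1 →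
      ℓ p qstar ≥ 1 / (2 * ((∑ x, n x * u x) + (∑ y, m y * v y)))) ∧
    ℓ pstar qstar = 1 / (2 * ((∑ x, n x * u x) + (∑ y, m y * v y))) := by
  set S := (∑ x, n x * u x) + (∑ y, m y * v y)
  set T := ∑ x, ∑ y, Φ x y * μ x y
  have hS : 0 ≤ S := add_nonneg (sum_nonneg fun x _ => mul_nonneg (hn x).le (hu0 x))
    (sum_nonneg fun y _ => mul_nonneg (hm y).le (hv0 y))
  have hloss : ∀ p, ℓ p qstar =
      ∑ z : X × Y, p z * ((lam z.1 z.2 * u z.1 + (1 - lam z.1 z.2) * v z.2) / (Φ z.1 z.2 * S)) := by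
    intro p
    simp only [hℓ, hq, Sum.elim_inl, Sum.elim_inr, Fintype.sum_prod_type,
      cell_loss_of_dual_strategy (hn _).ne' (hm _).ne']
  refine ⟨fun p hp0 hp1 => ?_, ?_⟩
  · rw [hloss]
    exact le_sum_mul_of_forall_le hp0 hp1 fun z => one_div_two_mul_le_div (h1 _ _) (hΦ _ _) hS
  have hslack : ∀ z : X × Y, pstar z * ((lam z.1 z.2 * u z.1 + (1 - lam z.1 z.2) * v z.2) /
      (Φ z.1 z.2 * S)) = pstar z * (1 / (2 * S)) := by
    intro z
    rcases (hμ0 z.1 z.2).eq_or_lt with h | h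
    · simp [hp, ← h]
    · rw [h4 _ _ h, half_div_mul_self_left (hΦ _ _).ne']
  rw [hloss, sum_congr rfl fun z _ => hslack z, ← sum_mul]
  -- If `μ* = 0`, then `p* = 0` by division by zero, but then also `S = 0` and both sides are `0`.
  by_cases hT : T = 0
  · simp [S, dual_value_eq_zero_of_matching_eq_zero hn hm hu0 hv0 h5 h6
      (eq_zero_of_sum_sum_mul_eq_zero hΦ hμ0 hT)]
  · rw [funext hp, ← sum_div, Fintype.sum_prod_type, div_self hT, one_mul]

/-- Against q*, every mixed strategy p of player 1 yields expected
loss at least 1/(2(nᵀu* + mᵀv*)), with equality at p*; hence p* is a best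
response to q* in the generalized hide-and-seek game. -/
theorem ltu_player1_best_response
    {X Y : Type*} [Fintype X] [Fintype Y] [Nonempty X] [Nonempty Y]
    (n : X → ℝ) (m : Y → ℝ) (lam Φ : X → Y → ℝ)
    (μ : X → Y → ℝ) (u : X → ℝ) (v : Y → ℝ)
    (hn : ∀ x, 0 < n x) (hm : ∀ y, 0 < m y)
    (hlam : ∀ x y, lam x y ∈ Set.Ioo (0 : ℝ) 1)
    (hΦ : ∀ x y, 0 < Φ x y)
    (hμ0 : ∀ x y, 0 ≤ μ x y) (hu0 : ∀ x, 0 ≤ u x) (hv0 : ∀ y, 0 ≤ v y)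
    (h1 : ∀ x y, lam x y * u x + (1 - lam x y) * v y ≥ Φ x y / 2)
    (h2 : ∀ x, ∑ y, μ x y ≤ n x)
    (h3 : ∀ y, ∑ x, μ x y ≤ m y)
    (h4 : ∀ x y, 0 < μ x y → lam x y * u x + (1 - lam x y) * v y = Φ x y / 2)
    (h5 : ∀ x, 0 < u x → ∑ y, μ x y = n x)
    (h6 : ∀ y, 0 < v y → ∑ x, μ x y = m y)
    -- expected loss of player 1
    (ℓ : (X × Y → ℝ) → (X ⊕ Y → ℝ) → ℝ)
    (hℓ : ∀ p q, ℓ p q = ∑ x, ∑ y, p (x, y) *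
      (q (Sum.inl x) * (lam x y / (n x * Φ x y)) +
       q (Sum.inr y) * ((1 - lam x y) / (m y * Φ x y))))
    -- the strategies p*, q*
    (pstar : X × Y → ℝ) (qstar : X ⊕ Y → ℝ)
    (hp : ∀ z : X × Y, pstar z = Φ z.1 z.2 * μ z.1 z.2 / (∑ x, ∑ y, Φ x y * μ x y))
    (hq : qstar = Sum.elim
      (fun x => n x * u x / ((∑ x, n x * u x) + (∑ y, m y * v y)))
      (fun y => m y * v y / ((∑ x, n x * u x) + (∑ y, m y * v y)))) :
    (∀ p : X × Y → ℝ, (∀ z, 0 ≤ p z) → (∑ z, p z) = 1 →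
      ℓ p qstar ≥ 1 / (2 * ((∑ x, n x * u x) + (∑ y, m y * v y)))) ∧
    ℓ pstar qstar = 1 / (2 * ((∑ x, n x * u x) + (∑ y, m y * v y))) :=
  ltu_player1_best_response_general n m lam Φ μ u v hn hm hΦ hμ0 hu0 hv0 h1 h4 h5 h6 ℓ hℓ pstar
    qstar hp hq
end

section
/- Let (μ*, u*, v*) be a stable outcome of the LTU matching problem, and define p*, q* by p*_{xy} = Φ_{xy} μ*_{xy} / (Φᵀμ*), q*_x = n_x u*_x / (nᵀu* + mᵀv*), q*_y = m_y v*_y / (nᵀu* + mᵀv*). Then for every probability distribution q on X ⊔ Y, the expected payoff of player 2 satisfies π(p*, q) ≤ 1 / (2 Φᵀμ*), with equality when q = q*. In particular q* is a best response to p*. -/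
/-!
Against `p*`, investigating row `x` pays player 2 the matched fraction `(∑ y, μ x y) / n x` of
that row, divided by `2 Φᵀμ`, and likewise for columns. Feasibility of `μ` keeps every such
fraction at most `1`, so no mixed strategy earns more than `1 / (2 Φᵀμ)`. The strategy `q*` only
weights agents with positive payoff, and by complementary slackness these are fully matched, so
`q*` attains the bound; its normalising constant `nᵀu + mᵀv` is positive because stability forces
some `u x` or `v y` to be positive.
-/

open Finset

section FillRate

variable {X Y : Type*} [Fintype X] [Fintype Y] (n : X → ℝ) (m : Y → ℝ) (μ : X → Y → ℝ)

noncomputable def fillRate : X ⊕ Y → ℝ :=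
  Sum.elim (fun x => (∑ y, μ x y) / n x) (fun y => (∑ x, μ x y) / m y)

def utilityMass (u : X → ℝ) (v : Y → ℝ) : X ⊕ Y → ℝ :=
  Sum.elim (fun x => n x * u x) (fun y => m y * v y)

theorem sum_payoff_eq_sum_mul_fillRate {Φ : X → Y → ℝ} (hΦ : ∀ x y, Φ x y ≠ 0) (S : ℝ)
    (q : X ⊕ Y → ℝ) :
    ∑ x, ∑ y, Φ x y * μ x y / S *
      (q (Sum.inl x) * (1 / (2 * n x * Φ x y)) + q (Sum.inr y) * (1 / (2 * m y * Φ x y))) =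
      (∑ z, q z * fillRate n m μ z) / (2 * S) := by
  have hterm : ∀ x y (a b : ℝ), Φ x y * μ x y / S * (a * (1 / (2 * b * Φ x y))) =
      a * (μ x y / b) / (2 * S) := fun x y a b => by
    field_simp [hΦ x y]
  simp only [Fintype.sum_sum_type, fillRate, Sum.elim_inl, Sum.elim_inr, mul_add, sum_add_distrib,
    hterm, add_div, sum_div, mul_sum]
  rw [sum_comm (f := fun x y => q (Sum.inr y) * (μ x y / m y) / (2 * S))]

theorem fillRate_le_one (hn : ∀ x, 0 ≤ n x) (hm : ∀ y, 0 ≤ m y)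
    (hrow : ∀ x, ∑ y, μ x y ≤ n x) (hcol : ∀ y, ∑ x, μ x y ≤ m y) :
    ∀ z, fillRate n m μ z ≤ 1
  | .inl x => div_le_one_of_le₀ (hrow x) (hn x)
  | .inr y => div_le_one_of_le₀ (hcol y) (hm y)

theorem utilityMass_mul_fillRate (hn : ∀ x, n x ≠ 0) (hm : ∀ y, m y ≠ 0) {u : X → ℝ} {v : Y → ℝ}
    (hu0 : ∀ x, 0 ≤ u x) (hv0 : ∀ y, 0 ≤ v y)
    (hrow : ∀ x, 0 < u x → ∑ y, μ x y = n x) (hcol : ∀ y, 0 < v y → ∑ x, μ x y = m y) :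
    ∀ z, utilityMass n m u v z * fillRate n m μ z = utilityMass n m u v z
  | .inl x => by
    rcases (hu0 x).eq_or_lt with h | h
    · simp [utilityMass, ← h]
    · simp [utilityMass, fillRate, hrow x h, hn x]
  | .inr y => by
    rcases (hv0 y).eq_or_lt with h | h
    · simp [utilityMass, ← h]
    · simp [utilityMass, fillRate, hcol y h, hm y]

theorem sum_utilityMass_pos [Nonempty X] [Nonempty Y] (hn : ∀ x, 0 < n x) (hm : ∀ y, 0 < m y)
    {lam Φ : X → Y → ℝ} {u : X → ℝ} {v : Y → ℝ} (hΦ : ∀ x y, 0 < Φ x y)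
    (hu0 : ∀ x, 0 ≤ u x) (hv0 : ∀ y, 0 ≤ v y)
    (hstable : ∀ x y, lam x y * u x + (1 - lam x y) * v y ≥ Φ x y / 2) :
    0 < ∑ z, utilityMass n m u v z := by
  obtain ⟨x⟩ := ‹Nonempty X›
  obtain ⟨y⟩ := ‹Nonempty Y›
  have hmass_nonneg : ∀ z, 0 ≤ utilityMass n m u v z
    | .inl x => mul_nonneg (hn x).le (hu0 x)
    | .inr y => mul_nonneg (hm y).le (hv0 y)
  have hpos : 0 < u x ∨ 0 < v y := by
    by_contra! h
    have := hstable x y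
    rw [le_antisymm h.1 (hu0 x), le_antisymm h.2 (hv0 y)] at this
    linarith [hΦ x y]
  rcases hpos with h | h
  · exact sum_pos' (fun z _ => hmass_nonneg z) ⟨.inl x, mem_univ _, mul_pos (hn x) h⟩
  · exact sum_pos' (fun z _ => hmass_nonneg z) ⟨.inr y, mem_univ _, mul_pos (hm y) h⟩

end FillRate

theorem ltu_player2_best_response_general
    {X Y : Type*} [Fintype X] [Fintype Y] [Nonempty X] [Nonempty Y]
    (n : X → ℝ) (m : Y → ℝ) (lam Φ : X → Y → ℝ)
    (μ : X → Y → ℝ) (u : X → ℝ) (v : Y → ℝ)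
    (hn : ∀ x, 0 < n x) (hm : ∀ y, 0 < m y)
    (hΦ : ∀ x y, 0 < Φ x y)
    (hμ0 : ∀ x y, 0 ≤ μ x y) (hu0 : ∀ x, 0 ≤ u x) (hv0 : ∀ y, 0 ≤ v y)
    (h1 : ∀ x y, lam x y * u x + (1 - lam x y) * v y ≥ Φ x y / 2)
    (h2 : ∀ x, ∑ y, μ x y ≤ n x)
    (h3 : ∀ y, ∑ x, μ x y ≤ m y)
    (h5 : ∀ x, 0 < u x → ∑ y, μ x y = n x)
    (h6 : ∀ y, 0 < v y → ∑ x, μ x y = m y)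
    -- expected payoff of player 2
    (π : (X × Y → ℝ) → (X ⊕ Y → ℝ) → ℝ)
    (hπ : ∀ p q, π p q = ∑ x, ∑ y, p (x, y) *
      (q (Sum.inl x) * (1 / (2 * n x * Φ x y)) +
       q (Sum.inr y) * (1 / (2 * m y * Φ x y))))
    -- the strategies p*, q*
    (pstar : X × Y → ℝ) (qstar : X ⊕ Y → ℝ)
    (hp : ∀ z : X × Y, pstar z = Φ z.1 z.2 * μ z.1 z.2 / (∑ x, ∑ y, Φ x y * μ x y))
    (hq : qstar = Sum.elim
      (fun x => n x * u x / ((∑ x, n x * u x) + (∑ y, m y * v y)))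
      (fun y => m y * v y / ((∑ x, n x * u x) + (∑ y, m y * v y)))) :
    (∀ q : X ⊕ Y → ℝ, (∀ z, 0 ≤ q z) → (∑ z, q z) = 1 →
      π pstar q ≤ 1 / (2 * ∑ x, ∑ y, Φ x y * μ x y)) ∧
    π pstar qstar = 1 / (2 * ∑ x, ∑ y, Φ x y * μ x y) := by
  have hpayoff (q : X ⊕ Y → ℝ) :
      π pstar q = (∑ z, q z * fillRate n m μ z) / (2 * ∑ x, ∑ y, Φ x y * μ x y) := by
    simp only [hπ, hp]
    exact sum_payoff_eq_sum_mul_fillRate n m μ (fun x y => (hΦ x y).ne') _ q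
  have hqstar : qstar = fun z => utilityMass n m u v z / ∑ z, utilityMass n m u v z := by
    rw [hq]
    ext (x | y) <;> simp [utilityMass, Fintype.sum_sum_type]
  have hfill_le := fillRate_le_one n m μ (fun x => (hn x).le) (fun y => (hm y).le) h2 h3
  have hslack := utilityMass_mul_fillRate n m μ (fun x => (hn x).ne') (fun y => (hm y).ne')
    hu0 hv0 h5 h6
  have hS : 0 ≤ 2 * ∑ x, ∑ y, Φ x y * μ x y := by
    have := sum_nonneg fun x (_ : x ∈ univ) =>
      sum_nonneg fun y (_ : y ∈ univ) => mul_nonneg (hΦ x y).le (hμ0 x y)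
    linarith
  refine ⟨fun q hq0 hq1 => ?_, ?_⟩
  · rw [hpayoff]
    refine div_le_div_of_nonneg_right ?_ hS
    calc ∑ z, q z * fillRate n m μ z ≤ ∑ z, q z :=
          sum_le_sum fun z _ => mul_le_of_le_one_right (hq0 z) (hfill_le z)
      _ = 1 := hq1
  · have hT := (sum_utilityMass_pos n m hn hm hΦ hu0 hv0 h1).ne'
    rw [hpayoff, hqstar]
    simp only [div_mul_eq_mul_div, hslack, ← sum_div, div_self hT]

/-- Against p*, every mixed strategy q of player 2 yields expected
payoff at most 1/(2 Φᵀμ*), with equality at q*; hence q* is a best response to p*. -/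
theorem ltu_player2_best_response
    {X Y : Type*} [Fintype X] [Fintype Y] [Nonempty X] [Nonempty Y]
    (n : X → ℝ) (m : Y → ℝ) (lam Φ : X → Y → ℝ)
    (μ : X → Y → ℝ) (u : X → ℝ) (v : Y → ℝ)
    (hn : ∀ x, 0 < n x) (hm : ∀ y, 0 < m y)
    (hlam : ∀ x y, lam x y ∈ Set.Ioo (0 : ℝ) 1)
    (hΦ : ∀ x y, 0 < Φ x y)
    (hμ0 : ∀ x y, 0 ≤ μ x y) (hu0 : ∀ x, 0 ≤ u x) (hv0 : ∀ y, 0 ≤ v y)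
    (h1 : ∀ x y, lam x y * u x + (1 - lam x y) * v y ≥ Φ x y / 2)
    (h2 : ∀ x, ∑ y, μ x y ≤ n x)
    (h3 : ∀ y, ∑ x, μ x y ≤ m y)
    (h4 : ∀ x y, 0 < μ x y → lam x y * u x + (1 - lam x y) * v y = Φ x y / 2)
    (h5 : ∀ x, 0 < u x → ∑ y, μ x y = n x)
    (h6 : ∀ y, 0 < v y → ∑ x, μ x y = m y)
    -- expected payoff of player 2
    (π : (X × Y → ℝ) → (X ⊕ Y → ℝ) → ℝ)
    (hπ : ∀ p q, π p q = ∑ x, ∑ y, p (x, y) *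
      (q (Sum.inl x) * (1 / (2 * n x * Φ x y)) +
       q (Sum.inr y) * (1 / (2 * m y * Φ x y))))
    -- the strategies p*, q*
    (pstar : X × Y → ℝ) (qstar : X ⊕ Y → ℝ)
    (hp : ∀ z : X × Y, pstar z = Φ z.1 z.2 * μ z.1 z.2 / (∑ x, ∑ y, Φ x y * μ x y))
    (hq : qstar = Sum.elim
      (fun x => n x * u x / ((∑ x, n x * u x) + (∑ y, m y * v y)))
      (fun y => m y * v y / ((∑ x, n x * u x) + (∑ y, m y * v y)))) :
    (∀ q : X ⊕ Y → ℝ, (∀ z, 0 ≤ q z) → (∑ z, q z) = 1 →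
      π pstar q ≤ 1 / (2 * ∑ x, ∑ y, Φ x y * μ x y)) ∧
    π pstar qstar = 1 / (2 * ∑ x, ∑ y, Φ x y * μ x y) :=
  ltu_player2_best_response_general n m lam Φ μ u v hn hm hΦ hμ0 hu0 hv0 h1 h2 h3 h5 h6 π hπ pstar
    qstar hp hq
end

section
/- If (μ*, u*, v*) is a stable outcome of the LTU matching problem with all Φ_{xy} > 0, then the pair of mixed strategies (p*, q*) defined by p*_{xy} = Φ_{xy} μ*_{xy}/(Φᵀμ*), q*_x = n_x u*_x/(nᵀu* + mᵀv*), q*_y = m_y v*_y/(nᵀu* + mᵀv*) is a Nash equilibrium of the generalized hide-and-seek game with payoffs α_{xy} = λ_{xy}/(n_x Φ_{xy}), β_{xy} = 1/(2 n_x Φ_{xy}), γ_{xy} = (1−λ_{xy})/(m_y Φ_{xy}), κ_{xy} = 1/(2 m_y Φ_{xy}). -/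
/-!
Both players' expected payoffs are bilinear, so a strategy is a best response as soon as it is
supported on the pure strategies whose coefficient is optimal. Write `T = nᵀu + mᵀv` and
`S = Φᵀμ`. Against `q*` the loss coefficient of `(x, y)` is `(λ u_x + (1 - λ) v_y) / (T Φ_{xy})`:
stability bounds it below by `1 / (2T)`, with equality where `μ_{xy} > 0`, i.e. on the support
of `p*`. Against `p*` the payoff coefficient of `x` is `(Σ_y μ_{xy} / n_x) / (2S)`: the capacity
constraint bounds it above by `1 / (2S)`, with equality where `u_x > 0`, i.e. on the support of
`q*`; likewise for `y`.
-/

open Finset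

section Linear

variable {ι : Type*} [Fintype ι] {w w' c : ι → ℝ} {a : ℝ}

theorem sum_mul_eq_of_support (hsupp : ∀ i, w i ≠ 0 → c i = a) :
    ∑ i, w i * c i = (∑ i, w i) * a := by
  rw [sum_mul]
  refine sum_congr rfl fun i _ => ?_
  by_cases hw : w i = 0
  · simp [hw]
  · rw [hsupp i hw]

theorem sum_mul_le_sum_mul_of_support_argmin (hc : ∀ i, a ≤ c i)
    (hsupp : ∀ i, w i ≠ 0 → c i = a) (hw' : ∀ i, 0 ≤ w' i) (hsum : ∑ i, w i = ∑ i, w' i) :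
    ∑ i, w i * c i ≤ ∑ i, w' i * c i :=
  calc ∑ i, w i * c i = ∑ i, w' i * a := by rw [sum_mul_eq_of_support hsupp, hsum, sum_mul]
    _ ≤ ∑ i, w' i * c i := sum_le_sum fun i _ => mul_le_mul_of_nonneg_left (hc i) (hw' i)

theorem sum_mul_le_sum_mul_of_support_argmax (hc : ∀ i, c i ≤ a)
    (hsupp : ∀ i, w i ≠ 0 → c i = a) (hw' : ∀ i, 0 ≤ w' i) (hsum : ∑ i, w' i = ∑ i, w i) :
    ∑ i, w' i * c i ≤ ∑ i, w i * c i :=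
  calc ∑ i, w' i * c i ≤ ∑ i, w' i * a :=
        sum_le_sum fun i _ => mul_le_mul_of_nonneg_left (hc i) (hw' i)
    _ = ∑ i, w i * c i := by rw [sum_mul_eq_of_support hsupp, ← hsum, sum_mul]

end Linear

section HideAndSeek

variable {X Y : Type*} [Fintype X] [Fintype Y]

def hideSeekPayoff (a b : X → Y → ℝ) (p : X × Y → ℝ) (q : X ⊕ Y → ℝ) : ℝ :=
  ∑ x, ∑ y, p (x, y) * (q (Sum.inl x) * a x y + q (Sum.inr y) * b x y)

theorem hideSeekPayoff_eq_sum_prod (a b : X → Y → ℝ) (p : X × Y → ℝ) (q : X ⊕ Y → ℝ) :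
    hideSeekPayoff a b p q =
      ∑ z : X × Y, p z * (q (Sum.inl z.1) * a z.1 z.2 + q (Sum.inr z.2) * b z.1 z.2) := by
  rw [hideSeekPayoff, Fintype.sum_prod_type]

theorem hideSeekPayoff_eq_sum_sum (a b : X → Y → ℝ) (p : X × Y → ℝ) (q : X ⊕ Y → ℝ) :
    hideSeekPayoff a b p q =
      ∑ s : X ⊕ Y, q s * Sum.elim (fun x => ∑ y, p (x, y) * a x y)
        (fun y => ∑ x, p (x, y) * b x y) s := by
  rw [hideSeekPayoff, Fintype.sum_sum_type]
  simp only [Sum.elim_inl, Sum.elim_inr, mul_add, sum_add_distrib, mul_sum]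
  rw [sum_comm (f := fun x y => p (x, y) * (q (Sum.inr y) * b x y))]
  congr 1 <;> exact sum_congr rfl fun _ _ => sum_congr rfl fun _ _ => by ring

end HideAndSeek

section Stable

variable {X Y : Type*} [Fintype X] [Fintype Y]
  {n : X → ℝ} {m : Y → ℝ} {lam Φ μ : X → Y → ℝ} {u : X → ℝ} {v : Y → ℝ}

noncomputable def totalSurplus (Φ μ : X → Y → ℝ) : ℝ := ∑ x, ∑ y, Φ x y * μ x y

noncomputable def totalUtility (n : X → ℝ) (m : Y → ℝ) (u : X → ℝ) (v : Y → ℝ) : ℝ :=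
  (∑ x, n x * u x) + (∑ y, m y * v y)

noncomputable def matchingStrategy (Φ μ : X → Y → ℝ) : X × Y → ℝ :=
  fun z => Φ z.1 z.2 * μ z.1 z.2 / totalSurplus Φ μ

noncomputable def utilityStrategy (n : X → ℝ) (m : Y → ℝ) (u : X → ℝ) (v : Y → ℝ) :
    X ⊕ Y → ℝ :=
  Sum.elim (fun x => n x * u x / totalUtility n m u v) (fun y => m y * v y / totalUtility n m u v)

theorem sum_matchingStrategy (hS : totalSurplus Φ μ ≠ 0) : ∑ z, matchingStrategy Φ μ z = 1 := by
  rw [Fintype.sum_prod_type]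
  simp only [matchingStrategy, ← sum_div]
  exact div_self hS

theorem sum_utilityStrategy (hT : totalUtility n m u v ≠ 0) :
    ∑ s, utilityStrategy n m u v s = 1 := by
  simp only [utilityStrategy, Fintype.sum_sum_type, Sum.elim_inl, Sum.elim_inr, ← sum_div,
    ← add_div]
  exact div_self hT

theorem exists_utility_pos [Nonempty X] [Nonempty Y] (hΦ : ∀ x y, 0 < Φ x y)
    (hu0 : ∀ x, 0 ≤ u x) (hv0 : ∀ y, 0 ≤ v y)
    (h1 : ∀ x y, lam x y * u x + (1 - lam x y) * v y ≥ Φ x y / 2) :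
    (∃ x, 0 < u x) ∨ ∃ y, 0 < v y := by
  obtain ⟨x⟩ := ‹Nonempty X›
  obtain ⟨y⟩ := ‹Nonempty Y›
  by_contra! h
  have hu : u x = 0 := le_antisymm (h.1 x) (hu0 x)
  have hv : v y = 0 := le_antisymm (h.2 y) (hv0 y)
  have := h1 x y
  rw [hu, hv] at this
  linarith [hΦ x y]

theorem totalUtility_pos [Nonempty X] [Nonempty Y] (hn : ∀ x, 0 < n x) (hm : ∀ y, 0 < m y)
    (hΦ : ∀ x y, 0 < Φ x y) (hu0 : ∀ x, 0 ≤ u x) (hv0 : ∀ y, 0 ≤ v y)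
    (h1 : ∀ x y, lam x y * u x + (1 - lam x y) * v y ≥ Φ x y / 2) :
    0 < totalUtility n m u v := by
  have hnu : ∀ x ∈ univ, 0 ≤ n x * u x := fun x _ => mul_nonneg (hn x).le (hu0 x)
  have hmv : ∀ y ∈ univ, 0 ≤ m y * v y := fun y _ => mul_nonneg (hm y).le (hv0 y)
  rcases exists_utility_pos hΦ hu0 hv0 h1 with ⟨x, hu⟩ | ⟨y, hv⟩
  · exact add_pos_of_pos_of_nonneg (sum_pos' hnu ⟨x, mem_univ _, mul_pos (hn x) hu⟩)
      (sum_nonneg hmv)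
  · exact add_pos_of_nonneg_of_pos (sum_nonneg hnu)
      (sum_pos' hmv ⟨y, mem_univ _, mul_pos (hm y) hv⟩)

theorem totalSurplus_pos [Nonempty X] [Nonempty Y] (hn : ∀ x, 0 < n x) (hm : ∀ y, 0 < m y)
    (hΦ : ∀ x y, 0 < Φ x y) (hμ0 : ∀ x y, 0 ≤ μ x y) (hu0 : ∀ x, 0 ≤ u x)
    (hv0 : ∀ y, 0 ≤ v y) (h1 : ∀ x y, lam x y * u x + (1 - lam x y) * v y ≥ Φ x y / 2)
    (h5 : ∀ x, 0 < u x → ∑ y, μ x y = n x) (h6 : ∀ y, 0 < v y → ∑ x, μ x y = m y) :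
    0 < totalSurplus Φ μ := by
  -- an agent with positive utility is fully matched, and capacities are positive
  obtain ⟨x, y, hμ⟩ : ∃ x y, 0 < μ x y := by
    rcases exists_utility_pos hΦ hu0 hv0 h1 with ⟨x, hu⟩ | ⟨y, hv⟩
    · obtain ⟨y, -, hy⟩ := exists_lt_of_sum_lt (f := 0) (g := μ x) (s := univ)
        (by simpa [h5 x hu] using hn x)
      exact ⟨x, y, hy⟩
    · obtain ⟨x, -, hx⟩ := exists_lt_of_sum_lt (f := 0) (g := fun x => μ x y) (s := univ)
        (by simpa [h6 y hv] using hm y)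
      exact ⟨x, y, hx⟩
  have hΦμ : ∀ x y, 0 ≤ Φ x y * μ x y := fun x y => mul_nonneg (hΦ x y).le (hμ0 x y)
  exact sum_pos' (fun x _ => sum_nonneg fun y _ => hΦμ x y)
    ⟨x, mem_univ _, sum_pos' (fun y _ => hΦμ x y) ⟨y, mem_univ _, mul_pos (hΦ x y) hμ⟩⟩

theorem utilityStrategy_loss_coeff {x : X} {y : Y} (hn : n x ≠ 0) (hm : m y ≠ 0)
    (hΦ : Φ x y ≠ 0) :
    utilityStrategy n m u v (Sum.inl x) * (lam x y / (n x * Φ x y)) +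
        utilityStrategy n m u v (Sum.inr y) * ((1 - lam x y) / (m y * Φ x y)) =
      (lam x y * u x + (1 - lam x y) * v y) / (totalUtility n m u v * Φ x y) := by
  simp only [utilityStrategy, Sum.elim_inl, Sum.elim_inr]
  field_simp

theorem matchingStrategy_payoff_coeff (hn : ∀ x, 0 < n x) (hm : ∀ y, 0 < m y)
    (hΦ : ∀ x y, 0 < Φ x y) (hS : totalSurplus Φ μ ≠ 0) :
    Sum.elim (fun x => ∑ y, matchingStrategy Φ μ (x, y) * (1 / (2 * n x * Φ x y)))
        (fun y => ∑ x, matchingStrategy Φ μ (x, y) * (1 / (2 * m y * Φ x y))) =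
      Sum.elim (fun x => (∑ y, μ x y) / n x / (2 * totalSurplus Φ μ))
        (fun y => (∑ x, μ x y) / m y / (2 * totalSurplus Φ μ)) := by
  ext (x | y)
  · simp only [Sum.elim_inl, sum_div]
    refine sum_congr rfl fun y _ => ?_
    have := (hΦ x y).ne'
    have := (hn x).ne'
    simp only [matchingStrategy]
    field_simp
  · simp only [Sum.elim_inr, sum_div]
    refine sum_congr rfl fun x _ => ?_
    have := (hΦ x y).ne'
    have := (hm y).ne'
    simp only [matchingStrategy]
    field_simp

theorem hideSeekPayoff_matchingStrategy_le (hn : ∀ x, 0 < n x) (hm : ∀ y, 0 < m y)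
    (hΦ : ∀ x y, 0 < Φ x y) (hμ0 : ∀ x y, 0 ≤ μ x y)
    (h1 : ∀ x y, lam x y * u x + (1 - lam x y) * v y ≥ Φ x y / 2)
    (h4 : ∀ x y, 0 < μ x y → lam x y * u x + (1 - lam x y) * v y = Φ x y / 2)
    (hT : 0 < totalUtility n m u v) (hS : totalSurplus Φ μ ≠ 0)
    {p : X × Y → ℝ} (hp0 : ∀ z, 0 ≤ p z) (hp1 : ∑ z, p z = 1) :
    hideSeekPayoff (fun x y => lam x y / (n x * Φ x y))
        (fun x y => (1 - lam x y) / (m y * Φ x y)) (matchingStrategy Φ μ)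
        (utilityStrategy n m u v) ≤
      hideSeekPayoff (fun x y => lam x y / (n x * Φ x y))
        (fun x y => (1 - lam x y) / (m y * Φ x y)) p (utilityStrategy n m u v) := by
  have hhalf : ∀ x y, 1 / (2 * totalUtility n m u v) =
      Φ x y / 2 / (totalUtility n m u v * Φ x y) := fun x y => by
    have := (hΦ x y).ne'
    field_simp
  rw [hideSeekPayoff_eq_sum_prod, hideSeekPayoff_eq_sum_prod]
  refine sum_mul_le_sum_mul_of_support_argmin (a := 1 / (2 * totalUtility n m u v))
    (fun ⟨x, y⟩ => ?_) (fun ⟨x, y⟩ hxy => ?_) hp0 (by rw [sum_matchingStrategy hS, hp1])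
  · rw [utilityStrategy_loss_coeff (hn x).ne' (hm y).ne' (hΦ x y).ne', hhalf x y]
    have := hΦ x y
    gcongr
    exact h1 x y
  · have hμ : 0 < μ x y := (hμ0 x y).lt_of_ne' fun h => hxy (by simp [matchingStrategy, h])
    rw [utilityStrategy_loss_coeff (hn x).ne' (hm y).ne' (hΦ x y).ne', h4 x y hμ, hhalf x y]

theorem hideSeekPayoff_le_utilityStrategy (hn : ∀ x, 0 < n x) (hm : ∀ y, 0 < m y)
    (hΦ : ∀ x y, 0 < Φ x y) (hu0 : ∀ x, 0 ≤ u x) (hv0 : ∀ y, 0 ≤ v y)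
    (h2 : ∀ x, ∑ y, μ x y ≤ n x) (h3 : ∀ y, ∑ x, μ x y ≤ m y)
    (h5 : ∀ x, 0 < u x → ∑ y, μ x y = n x) (h6 : ∀ y, 0 < v y → ∑ x, μ x y = m y)
    (hT : totalUtility n m u v ≠ 0) (hS : 0 < totalSurplus Φ μ)
    {q : X ⊕ Y → ℝ} (hq0 : ∀ s, 0 ≤ q s) (hq1 : ∑ s, q s = 1) :
    hideSeekPayoff (fun x y => 1 / (2 * n x * Φ x y)) (fun x y => 1 / (2 * m y * Φ x y))
        (matchingStrategy Φ μ) q ≤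
      hideSeekPayoff (fun x y => 1 / (2 * n x * Φ x y)) (fun x y => 1 / (2 * m y * Φ x y))
        (matchingStrategy Φ μ) (utilityStrategy n m u v) := by
  rw [hideSeekPayoff_eq_sum_sum, hideSeekPayoff_eq_sum_sum,
    matchingStrategy_payoff_coeff hn hm hΦ hS.ne']
  refine sum_mul_le_sum_mul_of_support_argmax (a := 1 / (2 * totalSurplus Φ μ))
    (fun s => ?_) (fun s hs => ?_) hq0 (by rw [sum_utilityStrategy hT, hq1])
  · rcases s with x | y
    · exact div_le_div_of_nonneg_right (div_le_one_of_le₀ (h2 x) (hn x).le) (by positivity)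
    · exact div_le_div_of_nonneg_right (div_le_one_of_le₀ (h3 y) (hm y).le) (by positivity)
  · rcases s with x | y
    · have hu : 0 < u x := (hu0 x).lt_of_ne' fun h => hs (by simp [utilityStrategy, h])
      rw [Sum.elim_inl, h5 x hu, div_self (hn x).ne']
    · have hv : 0 < v y := (hv0 y).lt_of_ne' fun h => hs (by simp [utilityStrategy, h])
      rw [Sum.elim_inr, h6 y hv, div_self (hm y).ne']

end Stable

theorem ltu_stable_gives_nash_general
    {X Y : Type*} [Fintype X] [Fintype Y] [Nonempty X] [Nonempty Y]
    (n : X → ℝ) (m : Y → ℝ) (lam Φ : X → Y → ℝ)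
    (μ : X → Y → ℝ) (u : X → ℝ) (v : Y → ℝ)
    (hn : ∀ x, 0 < n x) (hm : ∀ y, 0 < m y)
    (hΦ : ∀ x y, 0 < Φ x y)
    (hμ0 : ∀ x y, 0 ≤ μ x y) (hu0 : ∀ x, 0 ≤ u x) (hv0 : ∀ y, 0 ≤ v y)
    (h1 : ∀ x y, lam x y * u x + (1 - lam x y) * v y ≥ Φ x y / 2)
    (h2 : ∀ x, ∑ y, μ x y ≤ n x)
    (h3 : ∀ y, ∑ x, μ x y ≤ m y)
    (h4 : ∀ x y, 0 < μ x y → lam x y * u x + (1 - lam x y) * v y = Φ x y / 2)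
    (h5 : ∀ x, 0 < u x → ∑ y, μ x y = n x)
    (h6 : ∀ y, 0 < v y → ∑ x, μ x y = m y)
    -- expected loss of player 1 and expected payoff of player 2
    (ℓ π : (X × Y → ℝ) → (X ⊕ Y → ℝ) → ℝ)
    (hℓ : ∀ p q, ℓ p q = ∑ x, ∑ y, p (x, y) *
      (q (Sum.inl x) * (lam x y / (n x * Φ x y)) +
       q (Sum.inr y) * ((1 - lam x y) / (m y * Φ x y))))
    (hπ : ∀ p q, π p q = ∑ x, ∑ y, p (x, y) *
      (q (Sum.inl x) * (1 / (2 * n x * Φ x y)) +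
       q (Sum.inr y) * (1 / (2 * m y * Φ x y))))
    -- the strategies p*, q*
    (pstar : X × Y → ℝ) (qstar : X ⊕ Y → ℝ)
    (hp : ∀ z : X × Y, pstar z = Φ z.1 z.2 * μ z.1 z.2 / (∑ x, ∑ y, Φ x y * μ x y))
    (hq : qstar = Sum.elim
      (fun x => n x * u x / ((∑ x, n x * u x) + (∑ y, m y * v y)))
      (fun y => m y * v y / ((∑ x, n x * u x) + (∑ y, m y * v y)))) :
    (∀ p : X × Y → ℝ, (∀ z, 0 ≤ p z) → (∑ z, p z) = 1 →
      ℓ pstar qstar ≤ ℓ p qstar) ∧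
    (∀ q : X ⊕ Y → ℝ, (∀ z, 0 ≤ q z) → (∑ z, q z) = 1 →
      π pstar qstar ≥ π pstar q) := by
  obtain rfl : ℓ = hideSeekPayoff (fun x y => lam x y / (n x * Φ x y))
      (fun x y => (1 - lam x y) / (m y * Φ x y)) := funext₂ hℓ
  obtain rfl : π = hideSeekPayoff (fun x y => 1 / (2 * n x * Φ x y))
      (fun x y => 1 / (2 * m y * Φ x y)) := funext₂ hπ
  obtain rfl : pstar = matchingStrategy Φ μ := funext hp
  subst hq
  have hT := totalUtility_pos hn hm hΦ hu0 hv0 h1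
  have hS := totalSurplus_pos hn hm hΦ hμ0 hu0 hv0 h1 h5 h6
  exact ⟨fun p hp0 hp1 =>
      hideSeekPayoff_matchingStrategy_le hn hm hΦ hμ0 h1 h4 hT hS.ne' hp0 hp1,
    fun q hq0 hq1 =>
      hideSeekPayoff_le_utilityStrategy hn hm hΦ hu0 hv0 h2 h3 h5 h6 hT.ne' hS hq0 hq1⟩

/-- The pair (p*, q*) constructed from a stable outcome of the LTU
matching problem is a Nash equilibrium of the generalized hide-and-seek game. -/
theorem ltu_stable_gives_nash
    {X Y : Type*} [Fintype X] [Fintype Y] [Nonempty X] [Nonempty Y]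
    (n : X → ℝ) (m : Y → ℝ) (lam Φ : X → Y → ℝ)
    (μ : X → Y → ℝ) (u : X → ℝ) (v : Y → ℝ)
    (hn : ∀ x, 0 < n x) (hm : ∀ y, 0 < m y)
    (hlam : ∀ x y, lam x y ∈ Set.Ioo (0 : ℝ) 1)
    (hΦ : ∀ x y, 0 < Φ x y)
    (hμ0 : ∀ x y, 0 ≤ μ x y) (hu0 : ∀ x, 0 ≤ u x) (hv0 : ∀ y, 0 ≤ v y)
    (h1 : ∀ x y, lam x y * u x + (1 - lam x y) * v y ≥ Φ x y / 2)
    (h2 : ∀ x, ∑ y, μ x y ≤ n x)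
    (h3 : ∀ y, ∑ x, μ x y ≤ m y)
    (h4 : ∀ x y, 0 < μ x y → lam x y * u x + (1 - lam x y) * v y = Φ x y / 2)
    (h5 : ∀ x, 0 < u x → ∑ y, μ x y = n x)
    (h6 : ∀ y, 0 < v y → ∑ x, μ x y = m y)
    -- expected loss of player 1 and expected payoff of player 2
    (ℓ π : (X × Y → ℝ) → (X ⊕ Y → ℝ) → ℝ)
    (hℓ : ∀ p q, ℓ p q = ∑ x, ∑ y, p (x, y) *
      (q (Sum.inl x) * (lam x y / (n x * Φ x y)) +
       q (Sum.inr y) * ((1 - lam x y) / (m y * Φ x y))))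
    (hπ : ∀ p q, π p q = ∑ x, ∑ y, p (x, y) *
      (q (Sum.inl x) * (1 / (2 * n x * Φ x y)) +
       q (Sum.inr y) * (1 / (2 * m y * Φ x y))))
    -- the strategies p*, q*
    (pstar : X × Y → ℝ) (qstar : X ⊕ Y → ℝ)
    (hp : ∀ z : X × Y, pstar z = Φ z.1 z.2 * μ z.1 z.2 / (∑ x, ∑ y, Φ x y * μ x y))
    (hq : qstar = Sum.elim
      (fun x => n x * u x / ((∑ x, n x * u x) + (∑ y, m y * v y)))
      (fun y => m y * v y / ((∑ x, n x * u x) + (∑ y, m y * v y)))) :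
    (∀ p : X × Y → ℝ, (∀ z, 0 ≤ p z) → (∑ z, p z) = 1 →
      ℓ pstar qstar ≤ ℓ p qstar) ∧
    (∀ q : X ⊕ Y → ℝ, (∀ z, 0 ≤ q z) → (∑ z, q z) = 1 →
      π pstar qstar ≥ π pstar q) :=
  ltu_stable_gives_nash_general n m lam Φ μ u v hn hm hΦ hμ0 hu0 hv0 h1 h2 h3 h4 h5 h6 ℓ π hℓ hπ
    pstar qstar hp hq
end

section
/- If (p*, q*) is a Nash equilibrium of the generalized hide-and-seek game, then the outcome (μ*, u*, v*) defined by μ*_{xy} = p*_{xy}/(2 Φ_{xy} π(p*,q*)), u*_x = q*_x/(2 n_x ℓ(p*,q*)), v*_y = q*_y/(2 m_y ℓ(p*,q*)) satisfies the no-blocking-pair condition λ_{xy} u*_x + (1−λ_{xy}) v*_y ≥ Φ_{xy}/2 for all x ∈ X, y ∈ Y, with equality whenever μ*_{xy} > 0. -/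
/-!
Fixing the seeker's equilibrium strategy `q*`, the hider's loss `ℓ(·, q*)` is linear in `p`, so
`p*` minimises `p ↦ ∑ p_z c_z` over the simplex, where `c_{xy} = ℓ(δ_{xy}, q*)`. Hence
`ℓ(p*, q*) ≤ c_{xy}` for every pure strategy, with equality on the support of `p*`. Substituting
the recovered outcome gives `λ u*_x + (1 - λ) v*_y = Φ c_{xy} / (2 ℓ(p*, q*))`, and both claims
follow.
-/

open Finset

section LinearOnSimplex

variable {ι : Type*} [Fintype ι] {p c : ι → ℝ}

theorem sum_mul_le_of_isMinOn_stdSimplex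
    (hmin : IsMinOn (fun p : ι → ℝ => ∑ i, p i * c i) (stdSimplex ℝ ι) p) (j : ι) :
    ∑ i, p i * c i ≤ c j := by
  classical
  simpa [Pi.single_apply] using hmin (single_mem_stdSimplex ℝ j)

theorem eq_sum_mul_of_isMinOn_stdSimplex (hp : p ∈ stdSimplex ℝ ι)
    (hmin : IsMinOn (fun p : ι → ℝ => ∑ i, p i * c i) (stdSimplex ℝ ι) p) {j : ι}
    (hj : 0 < p j) : c j = ∑ i, p i * c i := by
  set L := ∑ i, p i * c i
  have hgap_nonneg : ∀ i ∈ univ, 0 ≤ p i * (c i - L) := fun i _ =>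
    mul_nonneg (hp.1 i) (sub_nonneg.2 (sum_mul_le_of_isMinOn_stdSimplex hmin i))
  -- the average of `c - L` under `p` is `L - L = 0`
  have hgap_sum : ∑ i, p i * (c i - L) = 0 := by
    simp only [mul_sub, sum_sub_distrib, ← sum_mul, hp.2, one_mul, L, sub_self]
  have hgap_j := (sum_eq_zero_iff_of_nonneg hgap_nonneg).1 hgap_sum j (mem_univ j)
  linarith [(mul_eq_zero.1 hgap_j).resolve_left hj.ne']

end LinearOnSimplex

theorem hide_seek_nash_no_blocking_pair_general
    {X Y : Type*} [Fintype X] [Fintype Y]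
    (n : X → ℝ) (m : Y → ℝ) (lam Φ : X → Y → ℝ)
    (hΦ : ∀ x y, 0 < Φ x y)
    (ℓ π : (X × Y → ℝ) → (X ⊕ Y → ℝ) → ℝ)
    (hℓ : ∀ p q, ℓ p q = ∑ x, ∑ y, p (x, y) *
      (q (Sum.inl x) * (lam x y / (n x * Φ x y)) +
       q (Sum.inr y) * ((1 - lam x y) / (m y * Φ x y))))
    (pstar : X × Y → ℝ) (qstar : X ⊕ Y → ℝ)
    (hp0 : ∀ z, 0 ≤ pstar z) (hp1 : (∑ z, pstar z) = 1)
    (hNash1 : ∀ p : X × Y → ℝ, (∀ z, 0 ≤ p z) → (∑ z, p z) = 1 →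
      ℓ pstar qstar ≤ ℓ p qstar)
    (hℓpos : 0 < ℓ pstar qstar)
    -- the recovered outcome
    (μ : X → Y → ℝ) (u : X → ℝ) (v : Y → ℝ)
    (hμ : ∀ x y, μ x y = pstar (x, y) / (2 * Φ x y * π pstar qstar))
    (hu : ∀ x, u x = qstar (Sum.inl x) / (2 * n x * ℓ pstar qstar))
    (hv : ∀ y, v y = qstar (Sum.inr y) / (2 * m y * ℓ pstar qstar)) :
    (∀ x y, lam x y * u x + (1 - lam x y) * v y ≥ Φ x y / 2) ∧
    (∀ x y, 0 < μ x y → lam x y * u x + (1 - lam x y) * v y = Φ x y / 2) := by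
  set L := ℓ pstar qstar
  set c : X × Y → ℝ := fun z => qstar (Sum.inl z.1) * (lam z.1 z.2 / (n z.1 * Φ z.1 z.2)) +
    qstar (Sum.inr z.2) * ((1 - lam z.1 z.2) / (m z.2 * Φ z.1 z.2))
  have hℓc : ∀ p, ℓ p qstar = ∑ z, p z * c z := fun p => by rw [hℓ, Fintype.sum_prod_type]
  have hmin : IsMinOn (fun p => ∑ z, p z * c z) (stdSimplex ℝ (X × Y)) pstar :=
    isMinOn_iff.2 fun p hp => by
      rw [← hℓc, ← hℓc]
      exact hNash1 p hp.1 hp.2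
  have hL_le : ∀ x y, L ≤ c (x, y) := fun x y => by
    simpa only [L, hℓc] using sum_mul_le_of_isMinOn_stdSimplex hmin (x, y)
  have hL_eq : ∀ x y, 0 < pstar (x, y) → c (x, y) = L := fun x y hxy => by
    simpa only [L, hℓc] using eq_sum_mul_of_isMinOn_stdSimplex ⟨hp0, hp1⟩ hmin hxy
  have hpayoff : ∀ x y, lam x y * u x + (1 - lam x y) * v y = Φ x y * c (x, y) / (2 * L) := by
    intro x y
    have := (hΦ x y).ne'
    simp only [hu, hv, c]
    field_simp
  refine ⟨fun x y => ?_, fun x y hμxy => ?_⟩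
  · rw [hpayoff, ge_iff_le, div_le_div_iff₀ two_pos (by positivity)]
    nlinarith [hΦ x y, hL_le x y]
  · have hpxy : 0 < pstar (x, y) := by
      rw [hμ] at hμxy
      exact (hp0 _).lt_of_ne fun h => by simp [← h] at hμxy
    rw [hpayoff, hL_eq x y hpxy]
    field_simp

/-- The outcome recovered from a Nash equilibrium of the generalized
hide-and-seek game satisfies the no-blocking-pair condition, with equality on the
support of μ*. -/
theorem hide_seek_nash_no_blocking_pair
    {X Y : Type*} [Fintype X] [Fintype Y]
    (n : X → ℝ) (m : Y → ℝ) (lam Φ : X → Y → ℝ)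
    (hn : ∀ x, 0 < n x) (hm : ∀ y, 0 < m y)
    (hlam : ∀ x y, lam x y ∈ Set.Ioo (0 : ℝ) 1)
    (hΦ : ∀ x y, 0 < Φ x y)
    (ℓ π : (X × Y → ℝ) → (X ⊕ Y → ℝ) → ℝ)
    (hℓ : ∀ p q, ℓ p q = ∑ x, ∑ y, p (x, y) *
      (q (Sum.inl x) * (lam x y / (n x * Φ x y)) +
       q (Sum.inr y) * ((1 - lam x y) / (m y * Φ x y))))
    (hπ : ∀ p q, π p q = ∑ x, ∑ y, p (x, y) *
      (q (Sum.inl x) * (1 / (2 * n x * Φ x y)) +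
       q (Sum.inr y) * (1 / (2 * m y * Φ x y))))
    (pstar : X × Y → ℝ) (qstar : X ⊕ Y → ℝ)
    (hp0 : ∀ z, 0 ≤ pstar z) (hp1 : (∑ z, pstar z) = 1)
    (hq0 : ∀ z, 0 ≤ qstar z) (hq1 : (∑ z, qstar z) = 1)
    (hNash1 : ∀ p : X × Y → ℝ, (∀ z, 0 ≤ p z) → (∑ z, p z) = 1 →
      ℓ pstar qstar ≤ ℓ p qstar)
    (hNash2 : ∀ q : X ⊕ Y → ℝ, (∀ z, 0 ≤ q z) → (∑ z, q z) = 1 →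
      π pstar qstar ≥ π pstar q)
    (hℓpos : 0 < ℓ pstar qstar) (hπpos : 0 < π pstar qstar)
    -- the recovered outcome
    (μ : X → Y → ℝ) (u : X → ℝ) (v : Y → ℝ)
    (hμ : ∀ x y, μ x y = pstar (x, y) / (2 * Φ x y * π pstar qstar))
    (hu : ∀ x, u x = qstar (Sum.inl x) / (2 * n x * ℓ pstar qstar))
    (hv : ∀ y, v y = qstar (Sum.inr y) / (2 * m y * ℓ pstar qstar)) :
    (∀ x y, lam x y * u x + (1 - lam x y) * v y ≥ Φ x y / 2) ∧
    (∀ x y, 0 < μ x y → lam x y * u x + (1 - lam x y) * v y = Φ x y / 2) :=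
  hide_seek_nash_no_blocking_pair_general n m lam Φ hΦ ℓ π hℓ pstar qstar hp0 hp1 hNash1 hℓpos μ u v
    hμ hu hv
end

section
/- If (p*, q*) is a Nash equilibrium of the generalized hide-and-seek game, then μ*_{xy} = p*_{xy}/(2 Φ_{xy} π(p*,q*)) satisfies the population feasibility constraints Σ_y μ*_{xy} ≤ n_x for all x and Σ_x μ*_{xy} ≤ m_y for all y, with equality in the x-constraint whenever q*_x > 0 and in the y-constraint whenever q*_y > 0. -/
/-! Against the pure strategy `δ_x` the seeker earns `Σ_y p*_{xy} / (2 n_x Φ_{xy})`, which is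
`π(p*, q*) / n_x` times `Σ_y μ*_{xy}`. Hence `Σ_y μ*_{xy} = n_x · π(p*, δ_x) / π(p*, q*)`, and the
best-response inequality and the equal-payoff property give the `x`-constraint and its equality
case; the `y`-constraints are symmetric. -/

open Finset

section HideSeek

variable {X Y : Type*} [Fintype X] [Fintype Y] [DecidableEq X] [DecidableEq Y]

def pairPayoff (a b : X → Y → ℝ) (p : X × Y → ℝ) (q : X ⊕ Y → ℝ) : ℝ :=
  ∑ x, ∑ y, p (x, y) * (q (Sum.inl x) * a x y + q (Sum.inr y) * b x y)

theorem pairPayoff_pure_inl (a b : X → Y → ℝ) (p : X × Y → ℝ) (x₀ : X) :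
    pairPayoff a b p (fun z => if z = Sum.inl x₀ then 1 else 0) = ∑ y, p (x₀, y) * a x₀ y := by
  rw [pairPayoff, sum_eq_single x₀]
  · simp
  · intro x _ hx
    simp [hx]
  · simp

theorem pairPayoff_pure_inr (a b : X → Y → ℝ) (p : X × Y → ℝ) (y₀ : Y) :
    pairPayoff a b p (fun z => if z = Sum.inr y₀ then 1 else 0) = ∑ x, p (x, y₀) * b x y₀ := by
  rw [pairPayoff, sum_comm, sum_eq_single y₀]
  · simp
  · intro y _ hy
    simp [hy]
  · simp

end HideSeek

theorem sum_div_two_mul_mul_eq {ι : Type*} [Fintype ι] (f g : ι → ℝ) {c : ℝ} (P : ℝ)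
    (hc : c ≠ 0) :
    ∑ i, f i / (2 * g i * P) = c * ((∑ i, f i * (1 / (2 * c * g i))) / P) := by
  rw [mul_div_assoc', mul_sum, sum_div]
  refine sum_congr rfl fun i _ => ?_
  field_simp

theorem hide_seek_nash_feasibility_general
    {X Y : Type*} [Fintype X] [Fintype Y] [DecidableEq X] [DecidableEq Y]
    (n : X → ℝ) (m : Y → ℝ) (Φ : X → Y → ℝ)
    (hn : ∀ x, 0 < n x) (hm : ∀ y, 0 < m y)
    (π : (X × Y → ℝ) → (X ⊕ Y → ℝ) → ℝ)
    (hπ : ∀ p q, π p q = ∑ x, ∑ y, p (x, y) *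
      (q (Sum.inl x) * (1 / (2 * n x * Φ x y)) +
       q (Sum.inr y) * (1 / (2 * m y * Φ x y))))
    (pstar : X × Y → ℝ) (qstar : X ⊕ Y → ℝ)
    -- best-response conditions of player 2 against pure strategies,
    -- with the equal-payoff property on the support of qstar
    (hbr : ∀ z : X ⊕ Y, π pstar qstar ≥ π pstar (fun z' => if z' = z then 1 else 0))
    (heq : ∀ z : X ⊕ Y, 0 < qstar z →
      π pstar (fun z' => if z' = z then 1 else 0) = π pstar qstar)
    (hπpos : 0 < π pstar qstar)
    (μ : X → Y → ℝ)
    (hμ : ∀ x y, μ x y = pstar (x, y) / (2 * Φ x y * π pstar qstar)) :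
    (∀ x, ∑ y, μ x y ≤ n x) ∧
    (∀ y, ∑ x, μ x y ≤ m y) ∧
    (∀ x, 0 < qstar (Sum.inl x) → ∑ y, μ x y = n x) ∧
    (∀ y, 0 < qstar (Sum.inr y) → ∑ x, μ x y = m y) := by
  set P := π pstar qstar
  have hπ' : π = pairPayoff (fun x y => 1 / (2 * n x * Φ x y))
      (fun x y => 1 / (2 * m y * Φ x y)) :=
    funext fun p => funext fun q => hπ p q
  have rowX (x : X) :
      ∑ y, μ x y = n x * (π pstar (fun z => if z = Sum.inl x then 1 else 0) / P) := by
    rw [hπ', pairPayoff_pure_inl, ← sum_div_two_mul_mul_eq _ _ _ (hn x).ne']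
    exact sum_congr rfl fun y _ => hμ x y
  have colY (y : Y) :
      ∑ x, μ x y = m y * (π pstar (fun z => if z = Sum.inr y then 1 else 0) / P) := by
    rw [hπ', pairPayoff_pure_inr, ← sum_div_two_mul_mul_eq _ _ _ (hm y).ne']
    exact sum_congr rfl fun x _ => hμ x y
  refine ⟨fun x => ?_, fun y => ?_, fun x hx => ?_, fun y hy => ?_⟩
  · rw [rowX]
    exact mul_le_of_le_one_right (hn x).le (div_le_one_of_le₀ (hbr _) hπpos.le)
  · rw [colY]
    exact mul_le_of_le_one_right (hm y).le (div_le_one_of_le₀ (hbr _) hπpos.le)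
  · rw [rowX, heq _ hx, div_self hπpos.ne', mul_one]
  · rw [colY, heq _ hy, div_self hπpos.ne', mul_one]

/-- The matching recovered from a Nash equilibrium of the generalized
hide-and-seek game satisfies the population feasibility constraints, with equality
whenever the corresponding pure strategy of player 2 has positive probability. -/
theorem hide_seek_nash_feasibility
    {X Y : Type*} [Fintype X] [Fintype Y] [DecidableEq X] [DecidableEq Y]
    (n : X → ℝ) (m : Y → ℝ) (lam Φ : X → Y → ℝ)
    (hn : ∀ x, 0 < n x) (hm : ∀ y, 0 < m y)
    (hlam : ∀ x y, lam x y ∈ Set.Ioo (0 : ℝ) 1)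
    (hΦ : ∀ x y, 0 < Φ x y)
    (π : (X × Y → ℝ) → (X ⊕ Y → ℝ) → ℝ)
    (hπ : ∀ p q, π p q = ∑ x, ∑ y, p (x, y) *
      (q (Sum.inl x) * (1 / (2 * n x * Φ x y)) +
       q (Sum.inr y) * (1 / (2 * m y * Φ x y))))
    (pstar : X × Y → ℝ) (qstar : X ⊕ Y → ℝ)
    (hp0 : ∀ z, 0 ≤ pstar z) (hp1 : (∑ z, pstar z) = 1)
    (hq0 : ∀ z, 0 ≤ qstar z) (hq1 : (∑ z, qstar z) = 1)
    -- best-response conditions of player 2 against pure strategies,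
    -- with the equal-payoff property on the support of qstar
    (hbr : ∀ z : X ⊕ Y, π pstar qstar ≥ π pstar (fun z' => if z' = z then 1 else 0))
    (heq : ∀ z : X ⊕ Y, 0 < qstar z →
      π pstar (fun z' => if z' = z then 1 else 0) = π pstar qstar)
    (hπpos : 0 < π pstar qstar)
    (μ : X → Y → ℝ)
    (hμ : ∀ x y, μ x y = pstar (x, y) / (2 * Φ x y * π pstar qstar)) :
    (∀ x, ∑ y, μ x y ≤ n x) ∧
    (∀ y, ∑ x, μ x y ≤ m y) ∧
    (∀ x, 0 < qstar (Sum.inl x) → ∑ y, μ x y = n x) ∧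
    (∀ y, 0 < qstar (Sum.inr y) → ∑ x, μ x y = m y) :=
  hide_seek_nash_feasibility_general n m Φ hn hm π hπ pstar qstar hbr heq hπpos μ hμ
end

section
/- If (p*, q*) is a Nash equilibrium of the generalized hide-and-seek game with payoffs α_{xy} = λ_{xy}/(n_x Φ_{xy}), β_{xy} = 1/(2 n_x Φ_{xy}), γ_{xy} = (1−λ_{xy})/(m_y Φ_{xy}), κ_{xy} = 1/(2 m_y Φ_{xy}), then the outcome (μ*, u*, v*) defined by μ*_{xy} = p*_{xy}/(2 Φ_{xy} π(p*,q*)), u*_x = q*_x/(2 n_x ℓ(p*,q*)), v*_y = q*_y/(2 m_y ℓ(p*,q*)) is a stable outcome of the LTU matching problem, i.e., it satisfies all six stability conditions. -/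
/-!
Against the seeker's equilibrium strategy `q*`, the hider's loss `ℓ(·, q*)` is linear, the pure
strategy `(x, y)` costing `hiderLoss = q*_x α_xy + q*_y γ_xy`; so every pure hider strategy costs
at least `ℓ(p*, q*)`, with equality on the support of `p*`. Symmetrically, `π(p*, ·)` is linear with
the pure seeker strategy `x` (resp. `y`) gaining `seekerGain = Σ_y p*_xy β_xy` (resp.
`Σ_x p*_xy κ_xy`), which is at most `π(p*, q*)`, with equality on the support of `q*`. The
rescaling defining `(μ, u, v)` gives `λ u_x + (1 - λ) v_y = Φ_xy / 2 · hiderLoss / ℓ` and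
`Σ_y μ_xy = n_x · seekerGain / π`, so these four facts are exactly the stability conditions.
Here `π > 0` because some pair carries hider mass, and `ℓ > 0` because a pair of zero hider loss
is one whose two sides the seeker never visits, so it contributes nothing to `π`.
-/

open Finset

section BestResponse

variable {ι : Type*} [Fintype ι] {f : (ι → ℝ) → ℝ} {c p : ι → ℝ}

theorem IsMinOn.le_of_stdSimplex (h : IsMinOn f (stdSimplex ℝ ι) p)
    (hf : ∀ q, f q = ∑ i, q i * c i) (i : ι) : f p ≤ c i := by
  classical
  simpa [hf, Pi.single_apply] using isMinOn_iff.1 h _ (single_mem_stdSimplex ℝ i)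

theorem IsMaxOn.ge_of_stdSimplex (h : IsMaxOn f (stdSimplex ℝ ι) p)
    (hf : ∀ q, f q = ∑ i, q i * c i) (i : ι) : c i ≤ f p := by
  classical
  simpa [hf, Pi.single_apply] using isMaxOn_iff.1 h _ (single_mem_stdSimplex ℝ i)

theorem eq_sum_mul_of_sum_mul_le_of_pos (hp : p ∈ stdSimplex ℝ ι)
    (hle : ∀ j, ∑ k, p k * c k ≤ c j) {i : ι} (hi : 0 < p i) : c i = ∑ k, p k * c k := by
  set E := ∑ k, p k * c k
  have hzero : ∑ k, p k * (c k - E) = 0 := by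
    simp only [mul_sub, sum_sub_distrib, ← sum_mul, hp.2, one_mul, E, sub_self]
  have hterm := (sum_eq_zero_iff_of_nonneg fun k _ ↦
    mul_nonneg (hp.1 k) (sub_nonneg.2 (hle k))).1 hzero i (mem_univ i)
  linarith [(mul_eq_zero.1 hterm).resolve_left hi.ne']

theorem IsMinOn.eq_of_stdSimplex_of_pos (h : IsMinOn f (stdSimplex ℝ ι) p)
    (hp : p ∈ stdSimplex ℝ ι) (hf : ∀ q, f q = ∑ i, q i * c i) {i : ι} (hi : 0 < p i) :
    c i = f p := by
  rw [hf]
  exact eq_sum_mul_of_sum_mul_le_of_pos hp (fun j ↦ hf p ▸ h.le_of_stdSimplex hf j) hi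

theorem IsMaxOn.eq_of_stdSimplex_of_pos (h : IsMaxOn f (stdSimplex ℝ ι) p)
    (hp : p ∈ stdSimplex ℝ ι) (hf : ∀ q, f q = ∑ i, q i * c i) {i : ι} (hi : 0 < p i) :
    c i = f p := by
  have hneg : ∀ q, -f q = ∑ i, q i * (-c) i := by simp [hf]
  simpa using h.neg.eq_of_stdSimplex_of_pos hp hneg hi

theorem sum_mul_pos_of_sum_mul_pos {g : ι → ℝ} (hp : ∀ i, 0 ≤ p i) (hc : ∀ i, 0 ≤ c i)
    (hcg : ∀ i, c i = 0 → g i = 0) (hg : 0 < ∑ i, p i * g i) :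
    0 < ∑ i, p i * c i := by
  refine (sum_nonneg fun i _ ↦ mul_nonneg (hp i) (hc i)).lt_of_ne fun h ↦ hg.ne' ?_
  refine sum_eq_zero fun i _ ↦ ?_
  rcases mul_eq_zero.1 ((sum_eq_zero_iff_of_nonneg fun i _ ↦
    mul_nonneg (hp i) (hc i)).1 h.symm i (mem_univ i)) with hpi | hci
  · rw [hpi, zero_mul]
  · rw [hcg i hci, mul_zero]

end BestResponse

noncomputable section HideSeek

variable {X Y : Type*} (n : X → ℝ) (m : Y → ℝ) (lam Φ : X → Y → ℝ)

def hiderLoss (q : X ⊕ Y → ℝ) (w : X × Y) : ℝ :=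
  q (Sum.inl w.1) * (lam w.1 w.2 / (n w.1 * Φ w.1 w.2)) +
    q (Sum.inr w.2) * ((1 - lam w.1 w.2) / (m w.2 * Φ w.1 w.2))

def seekerGain [Fintype X] [Fintype Y] (p : X × Y → ℝ) : X ⊕ Y → ℝ :=
  Sum.elim (fun x ↦ ∑ y, p (x, y) * (1 / (2 * n x * Φ x y)))
    (fun y ↦ ∑ x, p (x, y) * (1 / (2 * m y * Φ x y)))

variable {n m lam Φ}

theorem hiderLoss_coeffs_pos (hn : ∀ x, 0 < n x) (hm : ∀ y, 0 < m y)
    (hlam : ∀ x y, lam x y ∈ Set.Ioo (0 : ℝ) 1) (hΦ : ∀ x y, 0 < Φ x y) (x : X) (y : Y) :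
    0 < lam x y / (n x * Φ x y) ∧ 0 < (1 - lam x y) / (m y * Φ x y) := by
  have := hn x; have := hm y; have := hΦ x y
  have := (hlam x y).1; have := sub_pos.2 (hlam x y).2
  constructor <;> positivity

theorem hiderLoss_nonneg (hn : ∀ x, 0 < n x) (hm : ∀ y, 0 < m y)
    (hlam : ∀ x y, lam x y ∈ Set.Ioo (0 : ℝ) 1) (hΦ : ∀ x y, 0 < Φ x y) {q : X ⊕ Y → ℝ}
    (hq : ∀ z, 0 ≤ q z) (w : X × Y) : 0 ≤ hiderLoss n m lam Φ q w := by
  obtain ⟨hα, hγ⟩ := hiderLoss_coeffs_pos hn hm hlam hΦ w.1 w.2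
  unfold hiderLoss
  have := hq (Sum.inl w.1); have := hq (Sum.inr w.2)
  positivity

theorem hiderLoss_eq_zero_iff (hn : ∀ x, 0 < n x) (hm : ∀ y, 0 < m y)
    (hlam : ∀ x y, lam x y ∈ Set.Ioo (0 : ℝ) 1) (hΦ : ∀ x y, 0 < Φ x y) {q : X ⊕ Y → ℝ}
    (hq : ∀ z, 0 ≤ q z) {x : X} {y : Y} :
    hiderLoss n m lam Φ q (x, y) = 0 ↔ q (Sum.inl x) = 0 ∧ q (Sum.inr y) = 0 := by
  obtain ⟨hα, hγ⟩ := hiderLoss_coeffs_pos hn hm hlam hΦ x y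
  unfold hiderLoss
  rw [add_eq_zero_iff_of_nonneg (mul_nonneg (hq _) hα.le) (mul_nonneg (hq _) hγ.le),
    mul_eq_zero, mul_eq_zero, or_iff_left hα.ne', or_iff_left hγ.ne']

theorem lam_mul_add_one_sub_mul_eq (q : X ⊕ Y → ℝ) (L : ℝ) {x : X} {y : Y} (hn : n x ≠ 0)
    (hm : m y ≠ 0) (hΦ : Φ x y ≠ 0) :
    lam x y * (q (Sum.inl x) / (2 * n x * L)) + (1 - lam x y) * (q (Sum.inr y) / (2 * m y * L)) =
      Φ x y / 2 * (hiderLoss n m lam Φ q (x, y) / L) := by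
  unfold hiderLoss
  field_simp

variable [Fintype X] [Fintype Y]

theorem sum_sum_eq_sum_mul_hiderLoss (p : X × Y → ℝ) (q : X ⊕ Y → ℝ) :
    ∑ x, ∑ y, p (x, y) * (q (Sum.inl x) * (lam x y / (n x * Φ x y)) +
      q (Sum.inr y) * ((1 - lam x y) / (m y * Φ x y))) =
    ∑ w, p w * hiderLoss n m lam Φ q w := by
  rw [Fintype.sum_prod_type]
  rfl

theorem sum_sum_eq_sum_mul_seekerGain (p : X × Y → ℝ) (q : X ⊕ Y → ℝ) :
    ∑ x, ∑ y, p (x, y) * (q (Sum.inl x) * (1 / (2 * n x * Φ x y)) +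
      q (Sum.inr y) * (1 / (2 * m y * Φ x y))) =
    ∑ z, q z * seekerGain n m Φ p z := by
  simp only [mul_add, sum_add_distrib, Fintype.sum_sum_type, seekerGain, Sum.elim_inl,
    Sum.elim_inr, mul_sum]
  rw [sum_comm (f := fun x y ↦ p (x, y) * (q (Sum.inr y) * _))]
  congr 1 <;> exact sum_congr rfl fun _ _ ↦ sum_congr rfl fun _ _ ↦ by ring

theorem sum_mul_hiderLoss_pos (hn : ∀ x, 0 < n x) (hm : ∀ y, 0 < m y)
    (hlam : ∀ x y, lam x y ∈ Set.Ioo (0 : ℝ) 1) (hΦ : ∀ x y, 0 < Φ x y)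
    {p : X × Y → ℝ} {q : X ⊕ Y → ℝ} (hp : ∀ w, 0 ≤ p w) (hq : ∀ z, 0 ≤ q z)
    (hpos : 0 < ∑ x, ∑ y, p (x, y) * (q (Sum.inl x) * (1 / (2 * n x * Φ x y)) +
      q (Sum.inr y) * (1 / (2 * m y * Φ x y)))) :
    0 < ∑ w, p w * hiderLoss n m lam Φ q w := by
  rw [← Fintype.sum_prod_type'] at hpos
  refine sum_mul_pos_of_sum_mul_pos hp (hiderLoss_nonneg hn hm hlam hΦ hq) (fun ⟨x, y⟩ hw ↦ ?_) hpos
  obtain ⟨hx, hy⟩ := (hiderLoss_eq_zero_iff hn hm hlam hΦ hq).1 hw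
  simp [hx, hy]

theorem exists_seekerGain_pos (hn : ∀ x, 0 < n x) (hΦ : ∀ x y, 0 < Φ x y) {p : X × Y → ℝ}
    (hp : p ∈ stdSimplex ℝ (X × Y)) : ∃ z, 0 < seekerGain n m Φ p z := by
  obtain ⟨⟨x, y⟩, -, hxy⟩ :=
    exists_lt_of_sum_lt (by simp [hp.2] : ∑ _ : X × Y, (0 : ℝ) < ∑ w, p w)
  have := hn x
  refine ⟨Sum.inl x, lt_of_lt_of_le ?_ (single_le_sum (fun y' _ ↦ ?_) (mem_univ y))⟩
  · have := hΦ x y; positivity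
  · have := hΦ x y'; have := hp.1 (x, y'); positivity

theorem sum_div_eq_mul_seekerGain_inl (p : X × Y → ℝ) (P : ℝ) {x : X} (hn : n x ≠ 0)
    (hΦ : ∀ y, Φ x y ≠ 0) :
    ∑ y, p (x, y) / (2 * Φ x y * P) = n x * (seekerGain n m Φ p (Sum.inl x) / P) := by
  simp only [seekerGain, Sum.elim_inl, sum_div, mul_sum]
  refine sum_congr rfl fun y _ ↦ ?_
  have := hΦ y
  field_simp

theorem sum_div_eq_mul_seekerGain_inr (p : X × Y → ℝ) (P : ℝ) {y : Y} (hm : m y ≠ 0)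
    (hΦ : ∀ x, Φ x y ≠ 0) :
    ∑ x, p (x, y) / (2 * Φ x y * P) = m y * (seekerGain n m Φ p (Sum.inr y) / P) := by
  simp only [seekerGain, Sum.elim_inr, sum_div, mul_sum]
  refine sum_congr rfl fun x _ ↦ ?_
  have := hΦ x
  field_simp

end HideSeek

/-- The outcome recovered from a Nash equilibrium of the generalized
hide-and-seek game is a stable outcome of the LTU matching problem (all six
stability conditions hold). -/
theorem hide_seek_nash_gives_stable
    {X Y : Type*} [Fintype X] [Fintype Y]
    (n : X → ℝ) (m : Y → ℝ) (lam Φ : X → Y → ℝ)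
    (hn : ∀ x, 0 < n x) (hm : ∀ y, 0 < m y)
    (hlam : ∀ x y, lam x y ∈ Set.Ioo (0 : ℝ) 1)
    (hΦ : ∀ x y, 0 < Φ x y)
    (ℓ π : (X × Y → ℝ) → (X ⊕ Y → ℝ) → ℝ)
    (hℓ : ∀ p q, ℓ p q = ∑ x, ∑ y, p (x, y) *
      (q (Sum.inl x) * (lam x y / (n x * Φ x y)) +
       q (Sum.inr y) * ((1 - lam x y) / (m y * Φ x y))))
    (hπ : ∀ p q, π p q = ∑ x, ∑ y, p (x, y) *
      (q (Sum.inl x) * (1 / (2 * n x * Φ x y)) +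
       q (Sum.inr y) * (1 / (2 * m y * Φ x y))))
    (pstar : X × Y → ℝ) (qstar : X ⊕ Y → ℝ)
    (hp0 : ∀ z, 0 ≤ pstar z) (hp1 : (∑ z, pstar z) = 1)
    (hq0 : ∀ z, 0 ≤ qstar z) (hq1 : (∑ z, qstar z) = 1)
    (hNash1 : ∀ p : X × Y → ℝ, (∀ z, 0 ≤ p z) → (∑ z, p z) = 1 →
      ℓ pstar qstar ≤ ℓ p qstar)
    (hNash2 : ∀ q : X ⊕ Y → ℝ, (∀ z, 0 ≤ q z) → (∑ z, q z) = 1 →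
      π pstar qstar ≥ π pstar q)
    -- the recovered outcome
    (μ : X → Y → ℝ) (u : X → ℝ) (v : Y → ℝ)
    (hμ : ∀ x y, μ x y = pstar (x, y) / (2 * Φ x y * π pstar qstar))
    (hu : ∀ x, u x = qstar (Sum.inl x) / (2 * n x * ℓ pstar qstar))
    (hv : ∀ y, v y = qstar (Sum.inr y) / (2 * m y * ℓ pstar qstar)) :
    (∀ x y, lam x y * u x + (1 - lam x y) * v y ≥ Φ x y / 2) ∧
    (∀ x, ∑ y, μ x y ≤ n x) ∧
    (∀ y, ∑ x, μ x y ≤ m y) ∧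
    (∀ x y, 0 < μ x y → lam x y * u x + (1 - lam x y) * v y = Φ x y / 2) ∧
    (∀ x, 0 < u x → ∑ y, μ x y = n x) ∧
    (∀ y, 0 < v y → ∑ x, μ x y = m y) := by
  have hp : pstar ∈ stdSimplex ℝ (X × Y) := ⟨hp0, hp1⟩
  have hq : qstar ∈ stdSimplex ℝ (X ⊕ Y) := ⟨hq0, hq1⟩
  have hℓc (p) : ℓ p qstar = ∑ w, p w * hiderLoss n m lam Φ qstar w := by
    rw [hℓ, sum_sum_eq_sum_mul_hiderLoss]
  have hπd (q) : π pstar q = ∑ z, q z * seekerGain n m Φ pstar z := by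
    rw [hπ, sum_sum_eq_sum_mul_seekerGain]
  have hNashℓ : IsMinOn (ℓ · qstar) (stdSimplex ℝ _) pstar :=
    isMinOn_iff.2 fun p hp ↦ hNash1 p hp.1 hp.2
  have hNashπ : IsMaxOn (π pstar) (stdSimplex ℝ _) qstar :=
    isMaxOn_iff.2 fun q hq ↦ hNash2 q hq.1 hq.2
  have hL_le := hNashℓ.le_of_stdSimplex hℓc
  have hP_ge := hNashπ.ge_of_stdSimplex hπd
  obtain ⟨z, hz⟩ := exists_seekerGain_pos hn hΦ hp
  have hP : 0 < π pstar qstar := hz.trans_le (hP_ge z)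
  have hL : 0 < ℓ pstar qstar := by
    rw [hℓc]; exact sum_mul_hiderLoss_pos hn hm hlam hΦ hp0 hq0 (by rwa [← hπ])
  have hcross (x y) : lam x y * u x + (1 - lam x y) * v y =
      Φ x y / 2 * (hiderLoss n m lam Φ qstar (x, y) / ℓ pstar qstar) := by
    rw [hu, hv, lam_mul_add_one_sub_mul_eq _ _ (hn x).ne' (hm y).ne' (hΦ x y).ne']
  have hrow (x) : ∑ y, μ x y = n x * (seekerGain n m Φ pstar (Sum.inl x) / π pstar qstar) := by
    simp only [hμ]; exact sum_div_eq_mul_seekerGain_inl _ _ (hn x).ne' fun y ↦ (hΦ x y).ne'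
  have hcol (y) : ∑ x, μ x y = m y * (seekerGain n m Φ pstar (Sum.inr y) / π pstar qstar) := by
    simp only [hμ]; exact sum_div_eq_mul_seekerGain_inr _ _ (hm y).ne' fun x ↦ (hΦ x y).ne'
  refine ⟨fun x y ↦ ?_, fun x ↦ ?_, fun y ↦ ?_, fun x y hxy ↦ ?_, fun x hx ↦ ?_, fun y hy ↦ ?_⟩
  · rw [ge_iff_le, hcross]
    exact le_mul_of_one_le_right (by linarith [hΦ x y]) ((one_le_div hL).2 (hL_le _))
  · rw [hrow]; exact mul_le_of_le_one_right (hn x).le ((div_le_one hP).2 (hP_ge _))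
  · rw [hcol]; exact mul_le_of_le_one_right (hm y).le ((div_le_one hP).2 (hP_ge _))
  · rw [hμ, div_pos_iff_of_pos_right (mul_pos (by linarith [hΦ x y]) hP)] at hxy
    rw [hcross, hNashℓ.eq_of_stdSimplex_of_pos hp hℓc hxy, div_self hL.ne', mul_one]
  · rw [hu, div_pos_iff_of_pos_right (mul_pos (by linarith [hn x]) hL)] at hx
    rw [hrow, hNashπ.eq_of_stdSimplex_of_pos hq hπd hx, div_self hP.ne', mul_one]
  · rw [hv, div_pos_iff_of_pos_right (mul_pos (by linarith [hm y]) hL)] at hy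
    rw [hcol, hNashπ.eq_of_stdSimplex_of_pos hq hπd hy, div_self hP.ne', mul_one]
end

section
/- A LTU matching problem has the TU property if and only if for all x, x' ∈ X and y, y' ∈ Y, (ω_{xy} · ω_{x'y'}) / (ω_{x'y} · ω_{xy'}) = 1, where ω_{xy} = λ_{xy}/(1−λ_{xy}). -/
/-! The odds `ω = λ / (1 - λ)` of `λ = a / (a + b)` are `a / b`, so the TU property says exactly
that the positive matrix `ω` factors as `ω x y = a x / b y`. Such a factorisation forces every
cross-ratio to be `1`; conversely, if all cross-ratios are `1`, fixing a base point `(x₀, y₀)`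
gives `ω x y = ω x y₀ · ω x₀ y / ω x₀ y₀`, which is a factorisation. -/

open Set

noncomputable def odds (p : ℝ) : ℝ := p / (1 - p)

theorem odds_pos {p : ℝ} (hp : p ∈ Ioo 0 1) : 0 < odds p :=
  div_pos hp.1 (sub_pos.2 hp.2)

theorem eq_div_add_iff_odds_eq {p a b : ℝ} (hp : p ≠ 1) (ha : 0 < a) (hb : 0 < b) :
    p = a / (a + b) ↔ odds p = a / b := by
  have hp' : 1 - p ≠ 0 := sub_ne_zero.2 hp.symm
  rw [odds, eq_div_iff (by positivity), div_eq_div_iff hp' hb.ne']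
  constructor <;> intro h <;> linear_combination h

section Factorisation

variable {X Y : Type*}

theorem exists_div_iff_cross_ratio_eq_one {ω : X → Y → ℝ} (hω : ∀ x y, 0 < ω x y) :
    (∃ (f : X → ℝ) (g : Y → ℝ), (∀ x, 0 < f x) ∧ (∀ y, 0 < g y) ∧ ∀ x y, ω x y = f x / g y) ↔
      ∀ x x' y y', ω x y * ω x' y' / (ω x' y * ω x y') = 1 := by
  constructor
  · rintro ⟨f, g, hf, hg, hfg⟩ x x' y y'
    rw [hfg, hfg, hfg, hfg]
    have := (hf x).ne'; have := (hf x').ne'; have := (hg y).ne'; have := (hg y').ne'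
    field_simp
  intro h
  rcases isEmpty_or_nonempty X with hX | ⟨⟨x₀⟩⟩
  · exact ⟨1, 1, fun _ => one_pos, fun _ => one_pos, fun x => isEmptyElim x⟩
  rcases isEmpty_or_nonempty Y with hY | ⟨⟨y₀⟩⟩
  · exact ⟨1, 1, fun _ => one_pos, fun _ => one_pos, fun _ y => isEmptyElim y⟩
  refine ⟨fun x => ω x y₀, fun y => ω x₀ y₀ / ω x₀ y, fun x => hω x y₀,
    fun y => div_pos (hω x₀ y₀) (hω x₀ y), fun x y => ?_⟩
  have hcross : ω x y * ω x₀ y₀ = ω x₀ y * ω x y₀ :=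
    (div_eq_one_iff_eq (mul_pos (hω x₀ y) (hω x y₀)).ne').1 (h x x₀ y y₀)
  rw [div_div_eq_mul_div, eq_div_iff (hω x₀ y₀).ne']
  linear_combination hcross

end Factorisation

theorem tu_property_iff_cross_ratio_general
    {X Y : Type*}
    (lam : X → Y → ℝ)
    (hlam : ∀ x y, lam x y ∈ Set.Ioo (0 : ℝ) 1) :
    (∃ (a : X → ℝ) (b : Y → ℝ), (∀ x, 0 < a x) ∧ (∀ y, 0 < b y) ∧
      ∀ x y, lam x y = a x / (a x + b y)) ↔
    (∀ x x' y y',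
      (lam x y / (1 - lam x y)) * (lam x' y' / (1 - lam x' y')) /
        ((lam x' y / (1 - lam x' y)) * (lam x y' / (1 - lam x y'))) = 1) := by
  have tu_iff_odds_eq_div :
      (∃ (a : X → ℝ) (b : Y → ℝ), (∀ x, 0 < a x) ∧ (∀ y, 0 < b y) ∧
        ∀ x y, lam x y = a x / (a x + b y)) ↔
      ∃ (a : X → ℝ) (b : Y → ℝ), (∀ x, 0 < a x) ∧ (∀ y, 0 < b y) ∧
        ∀ x y, odds (lam x y) = a x / b y := by
    refine exists₂_congr fun a b => and_congr_right fun ha => and_congr_right fun hb => ?_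
    exact forall₂_congr fun x y => eq_div_add_iff_odds_eq (hlam x y).2.ne (ha x) (hb y)
  exact tu_iff_odds_eq_div.trans
    (exists_div_iff_cross_ratio_eq_one fun x y => odds_pos (hlam x y))

/-- An LTU matching problem has the TU property iff the cross-ratio
condition on the odds ratios ω_{xy} = λ_{xy}/(1−λ_{xy}) holds. -/
theorem tu_property_iff_cross_ratio
    {X Y : Type*} [Fintype X] [Fintype Y]
    (lam : X → Y → ℝ)
    (hlam : ∀ x y, lam x y ∈ Set.Ioo (0 : ℝ) 1) :
    (∃ (a : X → ℝ) (b : Y → ℝ), (∀ x, 0 < a x) ∧ (∀ y, 0 < b y) ∧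
      ∀ x y, lam x y = a x / (a x + b y)) ↔
    (∀ x x' y y',
      (lam x y / (1 - lam x y)) * (lam x' y' / (1 - lam x' y')) /
        ((lam x' y / (1 - lam x' y)) * (lam x y' / (1 - lam x y'))) = 1) :=
  tu_property_iff_cross_ratio_general lam hlam
end

section
/- In the many-to-one LTU hide-and-seek game, if (p*, q*) is a Nash equilibrium, then at equilibrium player 2 is indifferent between all pure strategies x ∈ X: π(p*, δ_x) = π(p*, q*) for every x ∈ X. Consequently μ*_a = p*_a/(Φ_a π(p*,q*)) satisfies the exact feasibility constraint Σ_a M_{x,a} μ*_a = n_x for every x. -/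
/-!
If player 2's pure strategy `x` paid strictly less than `π(p*, q*)`, then `q*_x = 0`, so the
arrangement holding `x` alone costs player 1 nothing against `q*`. Hence `ℓ(p*, q*) = 0`; as
`λ_{i,a} > 0` at every occupied position, each pair `(a, x)` with `M_{x,a} > 0` has positive loss,
so `π(p*, q*) = 0` as well, and no column can pay less than that since payoffs are nonnegative.
Feasibility is the indifference equation multiplied by `n_x / π(p*, q*)`, where `π(p*, q*) > 0`
because `p*` charges some nonempty arrangement.
-/

open Finset

section BilinearGame

variable {ι κ : Type*} [Fintype ι] [Fintype κ]

def bilinPayoff (M : ι → κ → ℝ) (p : ι → ℝ) (q : κ → ℝ) : ℝ :=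
  ∑ i, p i * ∑ j, q j * M i j

lemma bilinPayoff_eq_sum_mul_col (M : ι → κ → ℝ) (p : ι → ℝ) (q : κ → ℝ) :
    bilinPayoff M p q = ∑ j, q j * ∑ i, p i * M i j := by
  simp_rw [bilinPayoff, mul_sum, mul_left_comm (p _)]
  exact sum_comm

lemma bilinPayoff_single_left [DecidableEq ι] (M : ι → κ → ℝ) (i : ι) (q : κ → ℝ) :
    bilinPayoff M (Pi.single i 1) q = ∑ j, q j * M i j := by
  simp [bilinPayoff, Pi.single_apply]

lemma bilinPayoff_single_right [DecidableEq κ] (M : ι → κ → ℝ) (p : ι → ℝ) (j : κ) :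
    bilinPayoff M p (Pi.single j 1) = ∑ i, p i * M i j := by
  simp [bilinPayoff_eq_sum_mul_col, Pi.single_apply]

variable {M M' : ι → κ → ℝ} {p : ι → ℝ} {q : κ → ℝ}

lemma bilinPayoff_nonneg (hM : ∀ i j, 0 ≤ M i j) (hp : ∀ i, 0 ≤ p i) (hq : ∀ j, 0 ≤ q j) :
    0 ≤ bilinPayoff M p q :=
  sum_nonneg fun i _ => mul_nonneg (hp i) (sum_nonneg fun j _ => mul_nonneg (hq j) (hM i j))

lemma bilinPayoff_eq_zero_iff (hM : ∀ i j, 0 ≤ M i j) (hp : ∀ i, 0 ≤ p i)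
    (hq : ∀ j, 0 ≤ q j) : bilinPayoff M p q = 0 ↔ ∀ i j, p i * (q j * M i j) = 0 := by
  simp_rw [bilinPayoff, mul_sum]
  rw [sum_eq_zero_iff_of_nonneg fun i _ =>
    sum_nonneg fun j _ => mul_nonneg (hp i) (mul_nonneg (hq j) (hM i j))]
  simp_rw [sum_eq_zero_iff_of_nonneg fun j _ => mul_nonneg (hp _) (mul_nonneg (hq j) (hM _ j))]
  simp

lemma bilinPayoff_eq_zero_of_support_subset (hM : ∀ i j, 0 ≤ M i j)
    (hM' : ∀ i j, 0 ≤ M' i j) (hp : ∀ i, 0 ≤ p i) (hq : ∀ j, 0 ≤ q j)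
    (hsupp : ∀ i j, M' i j ≠ 0 → M i j ≠ 0) (h : bilinPayoff M p q = 0) :
    bilinPayoff M' p q = 0 := by
  rw [bilinPayoff_eq_zero_iff hM hp hq] at h
  rw [bilinPayoff_eq_zero_iff hM' hp hq]
  intro i j
  by_cases hM'ij : M' i j = 0
  · simp [hM'ij]
  · have hpq : p i * q j = 0 := by
      simpa [← mul_assoc, hsupp i j hM'ij] using h i j
    rw [← mul_assoc, hpq, zero_mul]

lemma eq_zero_of_lt_of_sum_mul_eq {t : κ → ℝ} {v : ℝ} (hq : q ∈ stdSimplex ℝ κ)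
    (ht : ∀ j, t j ≤ v) (hv : ∑ j, q j * t j = v) {j : κ} (hj : t j < v) : q j = 0 := by
  have hgap : ∑ j, q j * (v - t j) = 0 := by
    simp_rw [mul_sub, sum_sub_distrib, ← sum_mul, hq.2, one_mul, hv, sub_self]
  have := (sum_eq_zero_iff_of_nonneg fun j _ =>
    mul_nonneg (hq.1 j) (sub_nonneg.2 (ht j))).1 hgap j (mem_univ j)
  exact (mul_eq_zero.1 this).resolve_right (sub_pos.2 hj).ne'

variable [DecidableEq κ] {α β : ι → κ → ℝ}

theorem bilinPayoff_pos_of_isBestResponse (hβ : ∀ i j, 0 ≤ β i j)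
    (hrow : ∀ i, ∃ j, 0 < β i j) (hp : p ∈ stdSimplex ℝ ι)
    (hbest : ∀ q' ∈ stdSimplex ℝ κ, bilinPayoff β p q' ≤ bilinPayoff β p q) :
    0 < bilinPayoff β p q := by
  obtain ⟨i, -, hi⟩ := exists_lt_of_sum_lt (s := univ) (f := 0) (g := p) (by simp [hp.2])
  obtain ⟨j, hj⟩ := hrow i
  calc 0 < p i * β i j := mul_pos hi hj
    _ ≤ ∑ i', p i' * β i' j :=
      single_le_sum (fun i' _ => mul_nonneg (hp.1 i') (hβ i' j)) (mem_univ i)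
    _ = bilinPayoff β p (Pi.single j 1) := (bilinPayoff_single_right β p j).symm
    _ ≤ bilinPayoff β p q := hbest _ (single_mem_stdSimplex ℝ j)

theorem bilinPayoff_single_right_eq_of_isNash [DecidableEq ι] (hα : ∀ i j, 0 ≤ α i j)
    (hβ : ∀ i j, 0 ≤ β i j) (hsupp : ∀ i j, β i j ≠ 0 → α i j ≠ 0)
    (hsingle : ∀ j, ∃ i, ∀ j', j' ≠ j → α i j' = 0)
    (hp : p ∈ stdSimplex ℝ ι) (hq : q ∈ stdSimplex ℝ κ)
    (hbest₁ : ∀ p' ∈ stdSimplex ℝ ι, bilinPayoff α p q ≤ bilinPayoff α p' q)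
    (hbest₂ : ∀ q' ∈ stdSimplex ℝ κ, bilinPayoff β p q' ≤ bilinPayoff β p q) (j : κ) :
    bilinPayoff β p (Pi.single j 1) = bilinPayoff β p q := by
  have hle : ∀ j, bilinPayoff β p (Pi.single j 1) ≤ bilinPayoff β p q :=
    fun j => hbest₂ _ (single_mem_stdSimplex ℝ j)
  refine (hle j).antisymm (not_lt.1 fun hlt => ?_)
  have hqj : q j = 0 := eq_zero_of_lt_of_sum_mul_eq hq hle
    (by simp_rw [bilinPayoff_single_right, bilinPayoff_eq_sum_mul_col β p q]) hlt
  obtain ⟨i, hi⟩ := hsingle j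
  have hdev : bilinPayoff α (Pi.single i 1) q = 0 := by
    rw [bilinPayoff_single_left]
    refine sum_eq_zero fun j' _ => ?_
    by_cases hj' : j' = j
    · rw [hj', hqj, zero_mul]
    · rw [hi j' hj', mul_zero]
  have hloss : bilinPayoff α p q = 0 :=
    (hdev ▸ hbest₁ _ (single_mem_stdSimplex ℝ i)).antisymm (bilinPayoff_nonneg hα hp.1 hq.1)
  have hvalue : bilinPayoff β p q = 0 :=
    bilinPayoff_eq_zero_of_support_subset hα hβ hp.1 hq.1 hsupp hloss
  have hcol : 0 ≤ bilinPayoff β p (Pi.single j 1) :=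
    bilinPayoff_nonneg hβ hp.1 (single_mem_stdSimplex ℝ j).1
  linarith

end BilinearGame

lemma sum_mul_div_mul_eq_of_sum_mul_div_mul_eq {ι : Type*} [Fintype ι] {c p Φ : ι → ℝ}
    {n v : ℝ} (hn : n ≠ 0) (hv : v ≠ 0) (h : ∑ i, p i * (c i / (n * Φ i)) = v) :
    ∑ i, c i * (p i / (Φ i * v)) = n :=
  calc ∑ i, c i * (p i / (Φ i * v)) = n / v * ∑ i, p i * (c i / (n * Φ i)) := by
        rw [mul_sum]
        refine sum_congr rfl fun i _ => ?_
        field_simp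
    _ = n := by rw [h, div_mul_cancel₀ n hv]

section HideAndSeek

variable {X A : Type*} [DecidableEq X] {N : ℕ} (memb : A → Fin N → Option X)
  (lam : A → Fin N → ℝ) (n : X → ℝ) (Φ : A → ℝ)

/- `memberCount a x`, `payoffMatrix a x` and `lossMatrix a x` are the paper's `M_{x,a}`, `β_{x,a}`
and `α_{x,a}`. -/
def memberCount (a : A) (x : X) : ℕ :=
  (Finset.univ.filter fun i => memb a i = some x).card

def memberWeight (a : A) (x : X) : ℝ :=
  ∑ i, if memb a i = some x then lam a i else 0

noncomputable def payoffMatrix (a : A) (x : X) : ℝ :=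
  memberCount memb a x / (n x * Φ a)

noncomputable def lossMatrix (a : A) (x : X) : ℝ :=
  memberWeight memb lam a x / (n x * Φ a)

variable {memb lam n Φ} {a : A}

lemma memberWeight_nonneg (hlam : ∀ i, 0 ≤ lam a i) (x : X) : 0 ≤ memberWeight memb lam a x :=
  sum_nonneg fun i _ => by split_ifs <;> simp [hlam i]

lemma memberWeight_pos_of_memberCount_pos (hlam : ∀ i, 0 ≤ lam a i)
    (hnone : ∀ i, lam a i = 0 → memb a i = none) {x : X} (h : 0 < memberCount memb a x) :
    0 < memberWeight memb lam a x := by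
  obtain ⟨i, hi⟩ := card_pos.1 h
  have hix : memb a i = some x := (mem_filter.1 hi).2
  have hlami : 0 < lam a i := (hlam i).lt_of_ne fun h0 => by simp [hnone i h0.symm] at hix
  exact sum_pos' (fun j _ => by split_ifs <;> simp [hlam j]) ⟨i, mem_univ i, by simpa [hix]⟩

lemma payoffMatrix_nonneg (hn : ∀ x, 0 ≤ n x) (hΦ : ∀ a, 0 ≤ Φ a) (a : A) (x : X) :
    0 ≤ payoffMatrix memb n Φ a x :=
  div_nonneg (Nat.cast_nonneg _) (mul_nonneg (hn x) (hΦ a))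

lemma lossMatrix_nonneg (hn : ∀ x, 0 ≤ n x) (hΦ : ∀ a, 0 ≤ Φ a) (hlam : ∀ a i, 0 ≤ lam a i)
    (a : A) (x : X) : 0 ≤ lossMatrix memb lam n Φ a x :=
  div_nonneg (memberWeight_nonneg (hlam a) x) (mul_nonneg (hn x) (hΦ a))

lemma lossMatrix_ne_zero_of_payoffMatrix_ne_zero (hlam : ∀ i, 0 ≤ lam a i)
    (hnone : ∀ i, lam a i = 0 → memb a i = none) {x : X} (h : payoffMatrix memb n Φ a x ≠ 0) :
    lossMatrix memb lam n Φ a x ≠ 0 := by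
  obtain ⟨hcount, hscale⟩ := div_ne_zero_iff.1 h
  have hweight := memberWeight_pos_of_memberCount_pos hlam hnone
    (Nat.pos_of_ne_zero (Nat.cast_ne_zero.1 hcount))
  exact div_ne_zero hweight.ne' hscale

lemma exists_payoffMatrix_pos (hn : ∀ x, 0 < n x) (hΦ : ∀ a, 0 < Φ a)
    (h : ∃ i, memb a i ≠ none) : ∃ x, 0 < payoffMatrix memb n Φ a x := by
  obtain ⟨i, hi⟩ := h
  obtain ⟨x, hx⟩ := Option.ne_none_iff_exists'.1 hi
  have hcount : 0 < memberCount memb a x := card_pos.2 ⟨i, by simp [hx]⟩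
  exact ⟨x, div_pos (Nat.cast_pos.2 hcount) (mul_pos (hn x) (hΦ a))⟩

lemma exists_lossMatrix_eq_zero_of_ne {x : X}
    (h : ∃ a, ∃ i, memb a i = some x ∧ ∀ j, j ≠ i → memb a j = none) :
    ∃ a, ∀ x', x' ≠ x → lossMatrix memb lam n Φ a x' = 0 := by
  obtain ⟨a, i, hi, hrest⟩ := h
  refine ⟨a, fun x' hx' => div_eq_zero_iff.2 (Or.inl (sum_eq_zero fun j _ => if_neg ?_))⟩
  by_cases hj : j = i
  · simp [hj, hi, Ne.symm hx']
  · simp [hrest j hj]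

end HideAndSeek

theorem many_to_one_nash_feasibility_general
    {X : Type*} [Fintype X] [DecidableEq X]
    {N : ℕ} {A : Type*} [Fintype A]
    (memb : A → Fin N → Option X)
    (lam : A → Fin N → ℝ) (Φ : A → ℝ) (n : X → ℝ)
    (hn : ∀ x, 0 < n x) (hΦ : ∀ a, 0 < Φ a)
    (hlam0 : ∀ a i, 0 ≤ lam a i)
    (hlamnone : ∀ a i, lam a i = 0 ↔ memb a i = none)
    -- the empty arrangement is excluded
    (hne : ∀ a : A, ∃ i, memb a i ≠ none)
    -- each type has a singleton arrangement
    (hsingle : ∀ x : X, ∃ a : A, ∃ i, memb a i = some x ∧ ∀ j, j ≠ i → memb a j = none)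
    -- expected loss of player 1 and payoff of player 2
    (ℓ π : (A → ℝ) → (X → ℝ) → ℝ)
    (hℓ : ∀ p q, ℓ p q = ∑ a, p a * ∑ x, q x *
      ((∑ i, if memb a i = some x then lam a i else 0) / (n x * Φ a)))
    (hπ : ∀ p q, π p q = ∑ a, p a * ∑ x, q x *
      (((Finset.univ.filter fun i => memb a i = some x).card : ℝ) / (n x * Φ a)))
    -- (p*, q*) is a Nash equilibrium
    (pstar : A → ℝ) (qstar : X → ℝ)
    (hp0 : ∀ a, 0 ≤ pstar a) (hp1 : (∑ a, pstar a) = 1)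
    (hq0 : ∀ x, 0 ≤ qstar x) (hq1 : (∑ x, qstar x) = 1)
    (hNash1 : ∀ p : A → ℝ, (∀ a, 0 ≤ p a) → (∑ a, p a) = 1 →
      ℓ pstar qstar ≤ ℓ p qstar)
    (hNash2 : ∀ q : X → ℝ, (∀ x, 0 ≤ q x) → (∑ x, q x) = 1 →
      π pstar qstar ≥ π pstar q)
    -- the recovered matching
    (μ : A → ℝ)
    (hμ : ∀ a, μ a = pstar a / (Φ a * π pstar qstar)) :
    (∀ x : X, π pstar (fun x' => if x' = x then 1 else 0) = π pstar qstar) ∧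
    (∀ x : X, ∑ a, ((Finset.univ.filter fun i => memb a i = some x).card : ℝ) * μ a = n x) := by
  classical
  have hℓα : ℓ = bilinPayoff (lossMatrix memb lam n Φ) := funext fun p => funext (hℓ p)
  have hπβ : π = bilinPayoff (payoffMatrix memb n Φ) := funext fun p => funext (hπ p)
  subst hℓα hπβ
  have hβ := payoffMatrix_nonneg (memb := memb) (fun x => (hn x).le) (fun a => (hΦ a).le)
  have hind := bilinPayoff_single_right_eq_of_isNash
    (lossMatrix_nonneg (fun x => (hn x).le) (fun a => (hΦ a).le) hlam0) hβ
    (fun a _ => lossMatrix_ne_zero_of_payoffMatrix_ne_zero (hlam0 a) fun i => (hlamnone a i).1)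
    (fun x => exists_lossMatrix_eq_zero_of_ne (hsingle x)) ⟨hp0, hp1⟩ ⟨hq0, hq1⟩
    (fun p hp => hNash1 p hp.1 hp.2) (fun q hq => hNash2 q hq.1 hq.2)
  have hvalue := bilinPayoff_pos_of_isBestResponse hβ
    (fun a => exists_payoffMatrix_pos hn hΦ (hne a)) ⟨hp0, hp1⟩ (fun q hq => hNash2 q hq.1 hq.2)
  refine ⟨fun x => funext (Pi.single_apply x (1 : ℝ)) ▸ hind x, fun x => ?_⟩
  simp_rw [hμ]
  refine sum_mul_div_mul_eq_of_sum_mul_div_mul_eq (hn x).ne' hvalue.ne' ?_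
  exact (bilinPayoff_single_right _ pstar x).symm.trans (hind x)

/-- At a Nash equilibrium of the N-dimensional hide-and-seek game,
player 2 is indifferent between all pure strategies x ∈ X, and consequently the
recovered matching μ*_a = p*_a/(Φ_a π(p*,q*)) satisfies the exact feasibility
constraints Σ_a M_{x,a} μ*_a = n_x. -/
theorem many_to_one_nash_feasibility
    {X : Type*} [Fintype X] [DecidableEq X] [Nonempty X]
    {N : ℕ} {A : Type*} [Fintype A]
    (memb : A → Fin N → Option X)
    (lam : A → Fin N → ℝ) (Φ : A → ℝ) (n : X → ℝ)
    (hn : ∀ x, 0 < n x) (hΦ : ∀ a, 0 < Φ a)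
    (hlam0 : ∀ a i, 0 ≤ lam a i)
    (hlam1 : ∀ a, ∑ i, lam a i = 1)
    (hlamnone : ∀ a i, lam a i = 0 ↔ memb a i = none)
    -- the empty arrangement is excluded
    (hne : ∀ a : A, ∃ i, memb a i ≠ none)
    -- each type has a singleton arrangement
    (hsingle : ∀ x : X, ∃ a : A, ∃ i, memb a i = some x ∧ ∀ j, j ≠ i → memb a j = none)
    -- expected loss of player 1 and payoff of player 2
    (ℓ π : (A → ℝ) → (X → ℝ) → ℝ)
    (hℓ : ∀ p q, ℓ p q = ∑ a, p a * ∑ x, q x *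
      ((∑ i, if memb a i = some x then lam a i else 0) / (n x * Φ a)))
    (hπ : ∀ p q, π p q = ∑ a, p a * ∑ x, q x *
      (((Finset.univ.filter fun i => memb a i = some x).card : ℝ) / (n x * Φ a)))
    -- (p*, q*) is a Nash equilibrium
    (pstar : A → ℝ) (qstar : X → ℝ)
    (hp0 : ∀ a, 0 ≤ pstar a) (hp1 : (∑ a, pstar a) = 1)
    (hq0 : ∀ x, 0 ≤ qstar x) (hq1 : (∑ x, qstar x) = 1)
    (hNash1 : ∀ p : A → ℝ, (∀ a, 0 ≤ p a) → (∑ a, p a) = 1 →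
      ℓ pstar qstar ≤ ℓ p qstar)
    (hNash2 : ∀ q : X → ℝ, (∀ x, 0 ≤ q x) → (∑ x, q x) = 1 →
      π pstar qstar ≥ π pstar q)
    -- the recovered matching
    (μ : A → ℝ)
    (hμ : ∀ a, μ a = pstar a / (Φ a * π pstar qstar)) :
    (∀ x : X, π pstar (fun x' => if x' = x then 1 else 0) = π pstar qstar) ∧
    (∀ x : X, ∑ a, ((Finset.univ.filter fun i => memb a i = some x).card : ℝ) * μ a = n x) :=
  many_to_one_nash_feasibility_general memb lam Φ n hn hΦ hlam0 hlamnone hne hsingle ℓ π hℓ hπ pstar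
    qstar hp0 hp1 hq0 hq1 hNash1 hNash2 μ hμ
end
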